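/- arXiv:1410.8774 — 6 statements merged into one kernel-verified Lean document; each statement's English description precedes it below -/
import Mathlib

section
/- (Augmenting Graph Theorem) Let G be a finite simple graph and S an independent set in G. Then S is a maximum independent set (i.e. no independent set of G has strictly larger cardinality) if and only if there is no augmenting pair for S, i.e. no pair (W, B) with W ⊆ S, B ⊆ V(G)\S, B independent, |B| > |W|, and N(B) ∩ S ⊆ W. -/
open SimpleGraph

/-- `S` is an independent set in `G`: pairwise non-adjacent vertices. -/
def IndepOn {V : Type*} (G : SimpleGraph V) (S : Set V) : Prop :=
  S.Pairwise fun u v => ¬ G.Adj u v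

/-- `NSet G U` is the set of vertices adjacent to at least one vertex of `U`. -/
def NSet {V : Type*} (G : SimpleGraph V) (U : Set V) : Set V :=
  {v | ∃ u ∈ U, G.Adj u v}

/-- `(W, B)` is a bipartition of `G` into two independent parts covering all vertices. -/
def IsBipartition {V : Type*} (G : SimpleGraph V) (W B : Set V) : Prop :=
  W ∪ B = Set.univ ∧ Disjoint W B ∧ IndepOn G W ∧ IndepOn G B

/-- A bipartite graph `G` with parts `W` and `B` is irreducible if
(a) `|W| = |B| - 1`, (b) every nonempty `A ⊆ W` satisfies `|A| < |N(A) ∩ B|`,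
and (c) `G` is connected. -/
def IrreducibleBip {V : Type*} (G : SimpleGraph V) (W B : Set V) : Prop :=
  IsBipartition G W B ∧
  W.ncard + 1 = B.ncard ∧
  (∀ A ⊆ W, A.Nonempty → A.ncard < (NSet G A ∩ B).ncard) ∧
  G.Connected

/-- The simple tree `T_k`: the star `K_{1,k}` with each edge subdivided once.
Vertex `0` is the centre, vertices `1,…,k` are the subdivision vertices `a_i`,
and vertices `k+1,…,2k` are the leaves `b_i = i + k`. -/
def simpleTree (k : ℕ) : SimpleGraph (Fin (2 * k + 1)) :=
  SimpleGraph.fromRel fun i j =>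
    (i.val = 0 ∧ 1 ≤ j.val ∧ j.val ≤ k) ∨ (1 ≤ i.val ∧ i.val ≤ k ∧ j.val = i.val + k)

/-- The tree `S_{1,1,3}`: three leaves at distances 1, 1, 3 from the unique degree-3
vertex `0`. Edges: 0-1, 0-2, 0-3, 3-4, 4-5. -/
def S113 : SimpleGraph (Fin 6) :=
  SimpleGraph.fromRel fun i j =>
    (i = 0 ∧ j = 1) ∨ (i = 0 ∧ j = 2) ∨ (i = 0 ∧ j = 3) ∨ (i = 3 ∧ j = 4) ∨ (i = 4 ∧ j = 5)

/-- The claw `K_{1,3}`-freeness. -/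
def ClawFree {V : Type*} (G : SimpleGraph V) : Prop :=
  IsEmpty (completeBipartiteGraph (Fin 1) (Fin 3) ↪g G)

/-- Augmenting Graph Theorem: an independent set `S` is maximum if and only if
there is no augmenting pair `(W, B)` for `S`. -/
theorem statement1 {V : Type*} [Fintype V] (G : SimpleGraph V) (S : Set V)
    (hS : IndepOn G S) :
    (∀ T : Set V, IndepOn G T → T.ncard ≤ S.ncard) ↔
      ¬ ∃ W B : Set V, W ⊆ S ∧ B ⊆ Sᶜ ∧ IndepOn G B ∧ W.ncard < B.ncard ∧
        NSet G B ∩ S ⊆ W := by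
  classical
  constructor
  · rintro hmax ⟨W, B, hWS, hBc, hBind, hlt, hN⟩
    set T : Set V := (S \ W) ∪ B with hT
    have hdisj : Disjoint (S \ W) B := by
      refine Set.disjoint_left.mpr fun x hx hxB => ?_
      exact (hBc hxB) hx.1
    have hTind : IndepOn G T := by
      intro u hu v hv huv hadj
      rcases hu with hu | hu <;> rcases hv with hv | hv
      · exact hS hu.1 hv.1 huv hadj
      · exact hu.2 (hN ⟨⟨v, hv, hadj.symm⟩, hu.1⟩)
      · exact hv.2 (hN ⟨⟨u, hu, hadj⟩, hv.1⟩)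
      · exact hBind hu hv huv hadj
    have hcard : T.ncard = (S \ W).ncard + B.ncard :=
      Set.ncard_union_eq hdisj (Set.toFinite _) (Set.toFinite _)
    have hsd : (S \ W).ncard = S.ncard - W.ncard :=
      Set.ncard_diff hWS (Set.toFinite _)
    have hWle : W.ncard ≤ S.ncard := Set.ncard_le_ncard hWS (Set.toFinite _)
    have := hmax T hTind
    omega
  · intro hno T hTind
    by_contra hlt
    push_neg at hlt
    set B : Set V := T \ S with hB
    set W : Set V := NSet G B ∩ S with hW
    refine hno ⟨W, B, Set.inter_subset_right, fun x hx => hx.2, ?_, ?_, le_refl _⟩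
    · exact fun u hu v hv huv => hTind hu.1 hv.1 huv
    · have hdisjW : Disjoint (T ∩ S) W := by
        refine Set.disjoint_left.mpr fun x hx hxW => ?_
        obtain ⟨b, hbB, hb⟩ := hxW.1
        exact hTind hbB.1 hx.1 (fun h => hbB.2 (h ▸ hx.2)) hb
      have hsub : (T ∩ S) ∪ W ⊆ S := Set.union_subset Set.inter_subset_right
        Set.inter_subset_right
      have h1 : (T ∩ S).ncard + W.ncard ≤ S.ncard := by
        rw [← Set.ncard_union_eq hdisjW (Set.toFinite _) (Set.toFinite _)]
        exact Set.ncard_le_ncard hsub (Set.toFinite _)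
      have h2 : T.ncard = (T ∩ S).ncard + B.ncard := by
        rw [← Set.ncard_union_eq (Set.disjoint_left.mpr fun x hx hxB => hxB.2 hx.2)
          (Set.toFinite _) (Set.toFinite _), Set.inter_union_diff]
      omega
end

section
/- Every connected bipartite claw-free graph (a finite connected bipartite graph containing no induced K_{1,3}) is either a chordless path or a chordless cycle of even length. Consequently, a bipartite graph with a bipartition (W, B) is irreducible and claw-free if and only if it is a chordless path with |B| = |W| + 1, i.e. a chordless path of even length whose both endpoints lie in B. -/
open SimpleGraph

/-! In a bipartite graph the neighbours of a vertex are pairwise non-adjacent, so claw-freeness caps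
every degree at 2. A finite connected graph of maximum degree at most 2 is a path if some vertex has
degree at most 1 (remove that leaf and induct), and otherwise it is 2-regular, so deleting one of
its edges leaves it connected: a path whose ends are joined by the deleted edge, i.e. a cycle. The
rotation `i ↦ i + 1` of a cycle swaps the two sides of any bipartition, which therefore have equal
size, so the cycle is even and never satisfies `|B| = |W| + 1`. The sides of a bipartition of a path
are its even and odd positions, and `|B| = |W| + 1` forces an odd number of vertices with `B` the
even positions. Conversely, in such a path a nonempty set `A` of odd positions has at least
`|A| + 1` neighbours: the successors of its elements and the predecessor of its least element. -/

lemma Set.ncard_preimage_of_bijective {α β : Type*} {f : α → β} (hf : f.Bijective) (t : Set β) :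
    (f ⁻¹' t).ncard = t.ncard :=
  Set.ncard_preimage_of_injective_subset_range hf.injective (by simp [hf.surjective.range_eq])

lemma Nat.count_even (n : ℕ) : Nat.count Even n = (n + 1) / 2 := by
  induction n with
  | zero => rfl
  | succ n ih =>
    rw [Nat.count_succ, ih]
    split_ifs with h <;> [obtain ⟨k, hk⟩ := h; obtain ⟨k, hk⟩ := Nat.not_even_iff_odd.1 h] <;> omega

lemma ncard_setOf_even_fin (n : ℕ) : {i : Fin n | Even i.val}.ncard = (n + 1) / 2 := by
  have himage : Fin.val '' {i : Fin n | Even i.val} = ↑((Finset.range n).filter Even) := by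
    ext x
    simp only [Set.mem_image, Set.mem_ofPred_eq, Finset.coe_filter, Finset.mem_range]
    exact ⟨fun ⟨i, hi, hx⟩ => hx ▸ ⟨i.isLt, hi⟩, fun ⟨hx, he⟩ => ⟨⟨x, hx⟩, he, rfl⟩⟩
  rw [← Set.ncard_image_of_injective _ Fin.val_injective, himage, Set.ncard_coe_finset,
    ← Nat.count_eq_card_filter_range, Nat.count_even]

lemma ncard_compl_setOf_even_fin (n : ℕ) : {i : Fin n | Even i.val}ᶜ.ncard = n / 2 := by
  rw [Set.ncard_compl, ncard_setOf_even_fin, Nat.card_fin]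
  omega

lemma Fin.val_sub_eq_one_iff {n : ℕ} {i j : Fin (n + 1)} (hn : n ≠ 0) :
    (i - j).val = 1 ↔ j.val + 1 = i.val ∨ (i = 0 ∧ j = Fin.last n) := by
  rw [Fin.ext_iff, Fin.ext_iff, Fin.val_zero, Fin.val_last]
  rcases le_or_gt j i with h | h
  · rw [Fin.coe_sub_iff_le.2 h]; omega
  · rw [Fin.coe_sub_iff_lt.2 h]; omega

namespace SimpleGraph

variable {V V' : Type*} {G : SimpleGraph V} {H : SimpleGraph V'}

lemma Iso.ncard_neighborSet (φ : G ≃g H) (v : V) :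
    (H.neighborSet (φ v)).ncard = (G.neighborSet v).ncard := by
  rw [← φ.image_neighborSet, Set.ncard_image_of_injective _ φ.injective]

lemma Reachable.iff_of_forall_adj {p : V → Prop} (hp : ∀ u v, G.Adj u v → (p u ↔ p v)) {u v : V}
    (h : G.Reachable u v) : p u ↔ p v := by
  obtain ⟨w⟩ := h
  induction w with
  | nil => rfl
  | cons hadj _ ih => exact (hp _ _ hadj).trans ih

lemma neighborSet_deleteEdges_edge (x y : V) :
    (G.deleteEdges {s(x, y)}).neighborSet x = G.neighborSet x \ {y} := by
  ext z
  simp only [mem_neighborSet, deleteEdges_adj, Set.mem_singleton_iff, Set.mem_sdiff, Sym2.eq_iff,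
    true_and]
  refine and_congr_right fun hxz => ?_
  have := hxz.ne
  tauto

lemma ncard_neighborSet_induce_compl_singleton (v : V) (x : ({v}ᶜ : Set V)) :
    ((G.induce {v}ᶜ).neighborSet x).ncard = (G.neighborSet x \ {v}).ncard := by
  rw [neighborSet_induce, ← Set.ncard_preimage_of_injective_subset_range Subtype.val_injective
    (s := G.neighborSet x \ {v}) fun y hy => ⟨⟨y, hy.2⟩, rfl⟩]
  congr 1
  ext y
  simp only [Set.mem_preimage, Set.mem_sdiff, Set.mem_singleton_iff]
  exact ⟨fun h => ⟨h, y.2⟩, And.left⟩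

lemma pathGraph_adj_succ_succ {n : ℕ} {i j : Fin n} :
    (pathGraph (n + 1)).Adj i.succ j.succ ↔ (pathGraph n).Adj i j := by
  simp [pathGraph_adj]

lemma pathGraph_adj_zero_succ {n : ℕ} {j : Fin (n + 1)} :
    (pathGraph (n + 2)).Adj 0 j.succ ↔ j = 0 := by
  rw [pathGraph_adj, Fin.ext_iff, Fin.val_zero, Fin.val_succ, Fin.val_zero]
  omega

lemma ncard_neighborSet_pathGraph_le_two {n : ℕ} (j : Fin n) :
    ((pathGraph n).neighborSet j).ncard ≤ 2 := by
  have hsub : Fin.val '' (pathGraph n).neighborSet j ⊆ {j.val - 1, j.val + 1} := by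
    rintro _ ⟨i, hi, rfl⟩
    rw [mem_neighborSet, pathGraph_adj] at hi
    simp only [Set.mem_insert_iff, Set.mem_singleton_iff]
    omega
  rw [← Set.ncard_image_of_injective _ Fin.val_injective]
  exact (Set.ncard_le_ncard hsub).trans ((Set.ncard_insert_le _ _).trans (by simp))

lemma pathGraph_eq_last_of_ncard_neighborSet_le_one {m : ℕ} {j : Fin (m + 1)} (hj0 : j ≠ 0)
    (hj : ((pathGraph (m + 1)).neighborSet j).ncard ≤ 1) : j = Fin.last m := by
  by_contra hlast
  rw [Ne, Fin.ext_iff, Fin.val_zero] at hj0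
  rw [Fin.ext_iff, Fin.val_last] at hlast
  have hsub : {⟨j.val - 1, by omega⟩, ⟨j.val + 1, by omega⟩} ⊆
      (pathGraph (m + 1)).neighborSet j := by
    rintro _ (rfl | rfl) <;> rw [mem_neighborSet, pathGraph_adj] <;> dsimp only <;> omega
  have := Set.ncard_le_ncard hsub
  rw [Set.ncard_pair (by rw [Ne, Fin.ext_iff]; dsimp only; omega)] at this
  omega

lemma cycleGraph_adj_iff_pathGraph_adj_or {m : ℕ} (hm : m ≠ 0) {i j : Fin (m + 1)} :
    (cycleGraph (m + 1)).Adj i j ↔ (pathGraph (m + 1)).Adj i j ∨ s(i, j) = s(0, Fin.last m) := by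
  rw [cycleGraph_adj', pathGraph_adj, Fin.val_sub_eq_one_iff hm, Fin.val_sub_eq_one_iff hm,
    Sym2.eq_iff]
  tauto

lemma exists_iso_pathGraph_cons {n : ℕ} {v : V} (ψ : pathGraph (n + 1) ≃g G.induce {v}ᶜ)
    (hv : G.neighborSet v = {(ψ 0 : V)}) : ∃ φ : pathGraph (n + 2) ≃g G, φ 0 = v := by
  classical
  let e : Fin (n + 2) ≃ V :=
    (finSuccEquiv (n + 1)).trans ((Equiv.optionCongr ψ.toEquiv).trans (Equiv.optionSubtypeNe v))
  have he0 : e 0 = v := rfl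
  have hesucc : ∀ i, e i.succ = ψ i := fun _ => rfl
  have hzero : ∀ j, G.Adj (e 0) (e j) ↔ (pathGraph (n + 2)).Adj 0 j := by
    intro j
    cases j using Fin.cases with
    | zero => simp
    | succ j =>
      rw [he0, hesucc, pathGraph_adj_zero_succ, ← mem_neighborSet, hv, Set.mem_singleton_iff,
        Subtype.val_inj, ψ.apply_eq_iff_eq]
  refine ⟨⟨e, fun {i j} => ?_⟩, he0⟩
  cases i using Fin.cases with
  | zero => exact hzero j
  | succ i =>
    cases j using Fin.cases with
    | zero => rw [G.adj_comm, (pathGraph _).adj_comm]; exact hzero _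
    | succ j =>
      change G.Adj (e i.succ) (e j.succ) ↔ _
      rw [hesucc, hesucc, pathGraph_adj_succ_succ, ← ψ.map_adj_iff]
      rfl

lemma exists_iso_pathGraph_of_connected {n : ℕ} (hconn : G.Connected) (hcard : Nat.card V = n + 1)
    (hdeg : ∀ x, (G.neighborSet x).ncard ≤ 2) {v : V} (hv : (G.neighborSet v).ncard ≤ 1) :
    ∃ φ : pathGraph (n + 1) ≃g G, φ 0 = v := by
  induction n generalizing V with
  | zero =>
    have : Subsingleton V := (Nat.card_eq_one_iff_unique.1 hcard).1
    refine ⟨⟨(Finite.equivFinOfCardEq hcard).symm, fun {i j} => ?_⟩, Subsingleton.elim _ _⟩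
    obtain rfl : i = j := Fin.ext (by omega)
    exact iff_of_false G.irrefl (pathGraph 1).irrefl
  | succ n ih =>
    have : Finite V := Nat.finite_of_card_ne_zero (by omega)
    have : Nontrivial V := Finite.one_lt_card_iff_nontrivial.1 (by omega)
    obtain ⟨u, hu⟩ : ∃ u, G.neighborSet v = {u} := by
      have := (G.neighborSet_nonempty.2 (hconn.preconnected.not_isIsolated v)).ncard_pos
      exact Set.ncard_eq_one.1 (by omega)
    have hvu : G.Adj v u := by simp [← mem_neighborSet, hu]
    have hconn' : (G.induce {v}ᶜ).Connected := by
      have : Nonempty ({v}ᶜ : Set V) := ⟨⟨u, Set.mem_compl_singleton_iff.2 hvu.ne'⟩⟩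
      refine ⟨hconn.preconnected.induce_of_degree_eq_one fun x hx => ?_⟩
      rw [Set.notMem_compl_iff.1 hx, hu]
      exact Set.subsingleton_singleton
    have hcard' : Nat.card ({v}ᶜ : Set V) = n + 1 := by
      rw [Nat.card_coe_set_eq, Set.ncard_compl, Set.ncard_singleton]; omega
    have hdeg' : ∀ x, ((G.induce {v}ᶜ).neighborSet x).ncard ≤ 2 := fun x => by
      rw [ncard_neighborSet_induce_compl_singleton]
      exact (Set.ncard_le_ncard Set.sdiff_subset).trans (hdeg x)
    obtain ⟨ψ, hψ⟩ := ih hconn' hcard' hdeg' (v := ⟨u, Set.mem_compl_singleton_iff.2 hvu.ne'⟩) <| by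
      rw [ncard_neighborSet_induce_compl_singleton]
      change (G.neighborSet u \ {v}).ncard ≤ 1
      rw [Set.ncard_sdiff_singleton_of_mem (s := G.neighborSet u) hvu.symm]
      have := hdeg u; omega
    exact exists_iso_pathGraph_cons ψ (by rw [hψ, hu])

lemma exists_iso_cycleGraph_of_deleteEdges {m : ℕ} (hm : m ≠ 0) {v u : V} (hvu : G.Adj v u)
    (φ : pathGraph (m + 1) ≃g G.deleteEdges {s(v, u)}) (h0 : φ 0 = v)
    (hlast : φ (Fin.last m) = u) : Nonempty (cycleGraph (m + 1) ≃g G) := by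
  have hadj : ∀ a b,
      G.Adj a b ↔ (G.deleteEdges {s(v, u)}).Adj a b ∨ s(a, b) = s(φ 0, φ (Fin.last m)) := by
    intro a b
    rw [h0, hlast]
    have := G.adj_congr_of_sym2 (u := a) (v := b) (w := v) (x := u)
    rw [deleteEdges_adj, Set.mem_singleton_iff]
    tauto
  refine ⟨⟨φ.toEquiv, fun {i j} => ?_⟩⟩
  change G.Adj (φ i) (φ j) ↔ _
  rw [hadj, φ.map_adj_iff, cycleGraph_adj_iff_pathGraph_adj_or hm]
  simp only [Sym2.eq_iff, φ.injective.eq_iff]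

lemma exists_iso_cycleGraph_of_connected [Finite V] (hconn : G.Connected)
    (hdeg : ∀ x, (G.neighborSet x).ncard = 2) :
    3 ≤ Nat.card V ∧ Nonempty (cycleGraph (Nat.card V) ≃g G) := by
  obtain ⟨v⟩ := hconn.nonempty
  obtain ⟨u, w, -, hN⟩ := Set.ncard_eq_two.1 (hdeg v)
  have hvu : G.Adj v u := by simp [← mem_neighborSet, hN]
  have hcard : 3 ≤ Nat.card V := by
    have hins := Set.ncard_insert_of_notMem (G.notMem_neighborSet_self (a := v))
      (G.neighborSet v).toFinite
    have := Set.ncard_le_card (insert v (G.neighborSet v))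
    have := hdeg v
    omega
  obtain ⟨m, hm⟩ : ∃ m, Nat.card V = m + 1 := ⟨Nat.card V - 1, by omega⟩
  set G' := G.deleteEdges {s(v, u)}
  have hconn' : G'.Connected := hconn.connected_delete_edge_of_not_isBridge <| by
    rw [isBridge_iff, not_not]
    exact IsCycles.reachable_deleteEdges hvu fun x _ => hdeg x
  have hdeg' : ∀ x, (G'.neighborSet x).ncard ≤ 2 := fun x =>
    (Set.ncard_le_ncard (neighborSet_mono (G.deleteEdges_le _) x)).trans (hdeg x).le
  have hend : ∀ {x y}, G.Adj x y → s(x, y) = s(v, u) → (G'.neighborSet x).ncard = 1 := by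
    intro x y hxy he
    rw [show G' = G.deleteEdges {s(x, y)} by rw [he], neighborSet_deleteEdges_edge,
      Set.ncard_sdiff_singleton_of_mem (s := G.neighborSet x) hxy, hdeg]
  obtain ⟨φ, h0⟩ := exists_iso_pathGraph_of_connected hconn' hm hdeg' (hend hvu rfl).le
  have hlast : φ.symm u = Fin.last m := by
    refine pathGraph_eq_last_of_ncard_neighborSet_le_one (fun h => hvu.ne ?_) ?_
    · rw [← h0, ← h, φ.apply_symm_apply]
    · rw [← φ.ncard_neighborSet, φ.apply_symm_apply, hend hvu.symm Sym2.eq_swap]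
  refine ⟨hcard, hm ▸ exists_iso_cycleGraph_of_deleteEdges (by omega) hvu φ h0 ?_⟩
  rw [← hlast, φ.apply_symm_apply]

lemma exists_iso_pathGraph_or_cycleGraph [Finite V] (hconn : G.Connected)
    (hdeg : ∀ x, (G.neighborSet x).ncard ≤ 2) :
    (∃ n, Nonempty (pathGraph (n + 1) ≃g G)) ∨
      (3 ≤ Nat.card V ∧ Nonempty (cycleGraph (Nat.card V) ≃g G)) := by
  by_cases hleaf : ∃ v, (G.neighborSet v).ncard ≤ 1
  · obtain ⟨v, hv⟩ := hleaf
    have := hconn.nonempty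
    obtain ⟨n, hn⟩ : ∃ n, Nat.card V = n + 1 :=
      ⟨Nat.card V - 1, by have := Nat.card_pos (α := V); omega⟩
    obtain ⟨φ, -⟩ := exists_iso_pathGraph_of_connected hconn hn hdeg hv
    exact .inl ⟨n, ⟨φ⟩⟩
  · refine .inr (exists_iso_cycleGraph_of_connected hconn fun x => le_antisymm (hdeg x) ?_)
    exact Nat.lt_of_not_le fun h => hleaf ⟨x, h⟩

end SimpleGraph

lemma preimage_NSet {V V' : Type*} {G : SimpleGraph V} {H : SimpleGraph V'} (φ : H ≃g G)
    (A : Set V) : φ ⁻¹' NSet G A = NSet H (φ ⁻¹' A) := by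
  ext x
  constructor
  · rintro ⟨a, ha, hadj⟩
    refine ⟨φ.symm a, by simpa using ha, ?_⟩
    simpa using φ.symm.map_adj_iff.2 hadj
  · rintro ⟨a, ha, hadj⟩
    exact ⟨φ a, ha, φ.map_adj_iff.2 hadj⟩

section ClawFree

variable {V : Type*} {G : SimpleGraph V}

lemma ClawFree.ncard_neighborSet_le_two (hcf : ClawFree G) {v : V}
    (hind : IndepOn G (G.neighborSet v)) : (G.neighborSet v).ncard ≤ 2 := by
  by_contra! h3
  obtain ⟨t, hts, ht⟩ := Set.exists_subset_card_eq h3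
  obtain ⟨a, b, c, hab, hac, hbc, rfl⟩ := Set.ncard_eq_three.1 ht
  set leaf : Fin 3 → V := ![a, b, c]
  have hleaf_adj : ∀ i, G.Adj v (leaf i) := fun i => hts (by fin_cases i <;> simp [leaf])
  have hleaf_inj : leaf.Injective := by
    intro i j
    fin_cases i <;> fin_cases j <;> simp [leaf, hab, hac, hbc, hab.symm, hac.symm, hbc.symm]
  have hf_inj : (Sum.elim (fun _ => v) leaf : Fin 1 ⊕ Fin 3 → V).Injective := by
    rintro (i | i) (j | j) h
    · exact congrArg Sum.inl (Subsingleton.elim i j)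
    · exact absurd h (hleaf_adj j).ne
    · exact absurd h.symm (hleaf_adj i).ne
    · exact congrArg Sum.inr (hleaf_inj h)
  refine hcf.false ⟨⟨_, hf_inj⟩, ?_⟩
  rintro (i | i) (j | j)
  · simp
  · simpa using hleaf_adj j
  · simpa using (hleaf_adj i).symm
  · exact iff_of_false (fun hadj => hind (hleaf_adj i) (hleaf_adj j) hadj.ne hadj) (by simp)

lemma clawFree_of_ncard_neighborSet_le_two [Finite V] (h : ∀ v, (G.neighborSet v).ncard ≤ 2) :
    ClawFree G := by
  refine ⟨fun e => ?_⟩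
  have hsub : Set.range (e ∘ Sum.inr) ⊆ G.neighborSet (e (Sum.inl 0)) := by
    rintro _ ⟨i, rfl⟩
    exact e.map_adj_iff.2 (by simp)
  have := Set.ncard_le_ncard hsub (Set.toFinite _)
  rw [Set.ncard_range_of_injective (e.injective.comp Sum.inr_injective), Nat.card_fin] at this
  linarith [h (e (Sum.inl 0))]

end ClawFree

namespace IsBipartition

section General

variable {V V' : Type*} {G : SimpleGraph V} {H : SimpleGraph V'} {W B : Set V}

lemma compl_eq (h : IsBipartition G W B) : Bᶜ = W := by
  obtain ⟨hcover, hdisj, -, -⟩ := h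
  ext x
  have hx : x ∈ W ∪ B := hcover ▸ Set.mem_univ x
  exact ⟨hx.resolve_right, fun hW hB => Set.disjoint_left.1 hdisj hW hB⟩

lemma mem_iff_notMem_of_adj (h : IsBipartition G W B) {u v : V} (hadj : G.Adj u v) :
    u ∈ B ↔ v ∉ B := by
  have hW := h.compl_eq
  obtain ⟨-, -, hiW, hiB⟩ := h
  constructor
  · exact fun hu hv => hiB hu hv hadj.ne hadj
  · intro hv
    by_contra hu
    rw [← Set.mem_compl_iff, hW] at hu hv
    exact hiW hu hv hadj.ne hadj

lemma indepOn_neighborSet (h : IsBipartition G W B) (v : V) : IndepOn G (G.neighborSet v) :=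
  fun x hx y hy _ hxy => by
    have := h.mem_iff_notMem_of_adj hxy
    have := h.mem_iff_notMem_of_adj hx.symm
    have := h.mem_iff_notMem_of_adj hy.symm
    tauto

lemma comap (h : IsBipartition G W B) (φ : H ≃g G) : IsBipartition H (φ ⁻¹' W) (φ ⁻¹' B) := by
  obtain ⟨hcover, hdisj, hiW, hiB⟩ := h
  refine ⟨by rw [← Set.preimage_union, hcover, Set.preimage_univ], hdisj.preimage φ,
    fun u hu v hv huv hadj => hiW hu hv (φ.injective.ne huv) (φ.map_adj_iff.2 hadj),
    fun u hu v hv huv hadj => hiB hu hv (φ.injective.ne huv) (φ.map_adj_iff.2 hadj)⟩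

end General

variable {n : ℕ} {W B : Set (Fin n)}

lemma pathGraph_right_eq_even_or_compl (h : IsBipartition (pathGraph n) W B) :
    B = {i | Even i.val} ∨ B = {i | Even i.val}ᶜ := by
  have hstep : ∀ i j, (pathGraph n).Adj i j → ((i ∈ B ↔ Even i.val) ↔ (j ∈ B ↔ Even j.val)) := by
    intro i j hadj
    have hB := h.mem_iff_notMem_of_adj hadj
    have hparity : Even i.val ↔ ¬ Even j.val := by
      rcases pathGraph_adj.1 hadj with hij | hij <;> simp [← hij, Nat.even_add_one]
    tauto
  by_cases hex : ∃ i, (i ∈ B ↔ Even i.val)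
  · obtain ⟨i, hi⟩ := hex
    exact .inl <| Set.ext fun j => ((pathGraph_preconnected n i j).iff_of_forall_adj hstep).1 hi
  · refine .inr <| Set.ext fun j => ?_
    have := not_exists.1 hex j
    rw [Set.mem_compl_iff, Set.mem_ofPred_eq]
    tauto

lemma pathGraph_right_eq_even_of_ncard {W B : Set (Fin (n + 1))}
    (h : IsBipartition (pathGraph (n + 1)) W B)
    (hcount : W.ncard + 1 = B.ncard) : (∃ k, n = 2 * k) ∧ B = {i | Even i.val} := by
  rw [← h.compl_eq] at hcount
  rcases h.pathGraph_right_eq_even_or_compl with rfl | rfl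
  · rw [ncard_compl_setOf_even_fin, ncard_setOf_even_fin] at hcount
    exact ⟨⟨n / 2, by omega⟩, rfl⟩
  · rw [compl_compl, ncard_compl_setOf_even_fin, ncard_setOf_even_fin] at hcount
    omega

lemma cycleGraph_ncard_eq (hn : 2 ≤ n) (h : IsBipartition (cycleGraph n) W B) :
    W.ncard = B.ncard := by
  obtain ⟨m, rfl⟩ : ∃ m, n = m + 2 := ⟨n - 2, by omega⟩
  have hshift : (· + 1) ⁻¹' B = Bᶜ := Set.ext fun i => by
    have := h.mem_iff_notMem_of_adj (cycleGraph_adj.2 (.inr (add_sub_cancel_left i 1)))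
    rw [Set.mem_preimage, Set.mem_compl_iff]
    tauto
  rw [← h.compl_eq, ← hshift]
  exact Set.ncard_preimage_of_bijective (Equiv.addRight 1).bijective B

lemma even_of_cycleGraph (hn : 2 ≤ n) (h : IsBipartition (cycleGraph n) W B) : Even n := by
  have := Set.ncard_add_ncard_compl B
  rw [h.compl_eq, ← h.cycleGraph_ncard_eq hn, Nat.card_fin] at this
  exact ⟨W.ncard, this.symm⟩

end IsBipartition

lemma pathGraph_ncard_lt_ncard_NSet_inter_even {k : ℕ} {A : Set (Fin (2 * k + 1))}
    (hA : A ⊆ {i | Even i.val}ᶜ) (hne : A.Nonempty) :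
    A.ncard < (NSet (pathGraph (2 * k + 1)) A ∩ {i | Even i.val}).ncard := by
  have hodd : ∀ i ∈ A, Odd i.val := fun i hi => Nat.not_even_iff_odd.1 (hA hi)
  have hsucc : ∀ i ∈ A, (i + 1).val = i.val + 1 := fun i hi =>
    Fin.val_add_one_of_lt' (by obtain ⟨t, ht⟩ := hodd i hi; have := i.isLt; omega)
  obtain ⟨a, ha, hmin⟩ := Set.exists_min_image A Fin.val A.toFinite hne
  obtain ⟨t, ht⟩ := hodd a ha
  have hpred : (a - 1).val = a.val - 1 := Fin.val_sub_one_of_ne_zero fun h0 => by simp [h0] at ht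
  have hsub : insert (a - 1) ((· + 1) '' A) ⊆
      NSet (pathGraph (2 * k + 1)) A ∩ {i | Even i.val} := by
    refine Set.insert_subset ⟨⟨a, ha, pathGraph_adj.2 (.inr (by omega))⟩, ⟨t, by omega⟩⟩ ?_
    rintro _ ⟨i, hi, rfl⟩
    refine ⟨⟨i, hi, pathGraph_adj.2 (.inl (hsucc i hi).symm)⟩, ?_⟩
    obtain ⟨s, hs⟩ := hodd i hi
    exact ⟨s + 1, by simp only [hsucc i hi]; omega⟩
  have hfresh : a - 1 ∉ (· + 1) '' A := by
    rintro ⟨i, hi, hia⟩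
    have hval := congrArg Fin.val hia
    rw [hsucc i hi, hpred] at hval
    have := hmin i hi
    omega
  calc A.ncard < ((· + 1) '' A).ncard + 1 := by
        rw [Set.ncard_image_of_injective _ (add_left_injective 1)]; omega
    _ = (insert (a - 1) ((· + 1) '' A)).ncard := (Set.ncard_insert_of_notMem hfresh).symm
    _ ≤ _ := Set.ncard_le_ncard hsub

section Irreducible

variable {V : Type*} {G : SimpleGraph V} {W B : Set V}

lemma IsBipartition.exists_iso_pathGraph_of_clawFree [Finite V] (hbip : IsBipartition G W B)
    (hcount : W.ncard + 1 = B.ncard) (hconn : G.Connected) (hcf : ClawFree G) :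
    ∃ k, ∃ φ : pathGraph (2 * k + 1) ≃g G, ∀ i, φ i ∈ B ↔ Even i.val := by
  rcases exists_iso_pathGraph_or_cycleGraph hconn
    (fun v => hcf.ncard_neighborSet_le_two (hbip.indepOn_neighborSet v)) with
    ⟨n, ⟨φ⟩⟩ | ⟨h3, ⟨φ⟩⟩
  · rw [← Set.ncard_preimage_of_bijective φ.bijective W,
      ← Set.ncard_preimage_of_bijective φ.bijective B] at hcount
    obtain ⟨⟨k, rfl⟩, hB⟩ := (hbip.comap φ).pathGraph_right_eq_even_of_ncard hcount
    exact ⟨k, φ, Set.ext_iff.1 hB⟩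
  · have := (hbip.comap φ).cycleGraph_ncard_eq (by omega)
    rw [Set.ncard_preimage_of_bijective φ.bijective,
      Set.ncard_preimage_of_bijective φ.bijective] at this
    omega

lemma IsBipartition.irreducibleBip_of_iso_pathGraph (hbip : IsBipartition G W B) {k : ℕ}
    (φ : pathGraph (2 * k + 1) ≃g G) (hφ : ∀ i, φ i ∈ B ↔ Even i.val) :
    IrreducibleBip G W B := by
  have hB : φ ⁻¹' B = {i | Even i.val} := Set.ext hφ
  have hW : φ ⁻¹' W = {i | Even i.val}ᶜ := by rw [← (hbip.comap φ).compl_eq, hB]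
  refine ⟨hbip, ?_, fun A hAW hA => ?_, φ.connected_iff.1 (pathGraph_connected _)⟩
  · rw [← Set.ncard_preimage_of_bijective φ.bijective W,
      ← Set.ncard_preimage_of_bijective φ.bijective B, hW, hB, ncard_compl_setOf_even_fin,
      ncard_setOf_even_fin]
    omega
  · have := pathGraph_ncard_lt_ncard_NSet_inter_even (hW ▸ Set.preimage_mono hAW)
      (hA.preimage φ.surjective)
    rwa [← hB, ← preimage_NSet, ← Set.preimage_inter, Set.ncard_preimage_of_bijective φ.bijective,
      Set.ncard_preimage_of_bijective φ.bijective] at this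

lemma clawFree_of_iso_pathGraph {n : ℕ} (φ : pathGraph n ≃g G) : ClawFree G := by
  have : Finite V := .of_equiv _ φ.toEquiv
  refine clawFree_of_ncard_neighborSet_le_two fun v => ?_
  rw [← φ.apply_symm_apply v, φ.ncard_neighborSet]
  exact ncard_neighborSet_pathGraph_le_two _

end Irreducible

/-- (1) Every finite connected bipartite claw-free graph is a chordless path or a
chordless cycle of even length. (2) Consequently, a bipartite graph with bipartition
`(W, B)` is irreducible and claw-free iff it is a chordless path of even length with
both endpoints (i.e. all even positions) in `B`, so that `|B| = |W| + 1`. -/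
theorem statement3 :
    (∀ (V : Type) [Fintype V] (G : SimpleGraph V),
      G.Connected → (∃ W B : Set V, IsBipartition G W B) → ClawFree G →
      (∃ n, Nonempty (G ≃g pathGraph n)) ∨
      (∃ n, Even n ∧ 3 ≤ n ∧ Nonempty (G ≃g cycleGraph n))) ∧
    (∀ (V : Type) [Fintype V] (G : SimpleGraph V) (W B : Set V),
      IsBipartition G W B →
      ((IrreducibleBip G W B ∧ ClawFree G) ↔
        ∃ k, ∃ φ : pathGraph (2 * k + 1) ≃g G, ∀ i, φ i ∈ B ↔ Even i.val)) := by
  refine ⟨fun V _ G hconn ⟨W, B, hbip⟩ hcf => ?_, fun V _ G W B hbip => ⟨?_, ?_⟩⟩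
  · rcases exists_iso_pathGraph_or_cycleGraph hconn
      (fun v => hcf.ncard_neighborSet_le_two (hbip.indepOn_neighborSet v)) with
      ⟨n, ⟨φ⟩⟩ | ⟨h3, ⟨φ⟩⟩
    · exact .inl ⟨n + 1, ⟨φ.symm⟩⟩
    · exact .inr ⟨_, (hbip.comap φ).even_of_cycleGraph (by omega), h3, ⟨φ.symm⟩⟩
  · rintro ⟨⟨-, hcount, -, hconn⟩, hcf⟩
    exact hbip.exists_iso_pathGraph_of_clawFree hcount hconn hcf
  · rintro ⟨k, φ, hφ⟩
    exact ⟨hbip.irreducibleBip_of_iso_pathGraph φ hφ, clawFree_of_iso_pathGraph φ⟩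
end

section
/- For every positive integer t there exists an integer D(t) such that the following holds: if H is a finite bipartite graph with parts W and B that is irreducible, contains no induced subgraph isomorphic to K_{t-1,t}, and contains no induced subgraph isomorphic to the simple tree T_t, then every vertex of H has degree at most D(t). -/
/-!
Let `v` lie in the side `P` of an irreducible graph. Every set `S` of neighbors of `v` satisfies
`|S| ≤ |N(S) ∩ P| + 1`, so by Hall's theorem with deficiency all but two neighbors `a i` of `v`
are matched to distinct vertices `u i ≠ v` of `P`. Color a pair `i < j` by which of the edges
`a i u j` and `a j u i` are present. Ramsey's theorem gives `2t` indices on which the color is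
constant: if one kind of cross edge is always present, half of the `a i` and half of the `u j`
span an induced `K_{t-1,t}`; if neither is, `v` with the `a i` and `u i` spans an induced `T_t`.
So the degree of `v` is less than the Ramsey number plus two.
-/

open SimpleGraph

open Finset Function

theorem exists_strictMono_color_eq_of_lt (κ : Type*) [Fintype κ] (n : ℕ) :
    ∃ N : ℕ, ∀ {α : Type*} [LinearOrder α] (c : α → α → κ) (S : Finset α), N ≤ #S →
      ∃ x : Fin n → α, StrictMono x ∧ (∀ i, x i ∈ S) ∧
        ∃ f : Fin n → κ, ∀ i j, i < j → c (x i) (x j) = f i := by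
  induction n with
  | zero => exact ⟨0, fun _ _ _ => ⟨Fin.elim0, fun i => i.elim0, fun i => i.elim0, Fin.elim0,
      fun i => i.elim0⟩⟩
  | succ n ih =>
    obtain ⟨N, hN⟩ := ih
    refine ⟨Fintype.card κ * N + 1, fun {α} _ c S hS => ?_⟩
    classical
    have hSne : S.Nonempty := card_pos.1 (by omega)
    set x₀ := S.min' hSne
    -- pigeonhole on the colors of the pairs `(x₀, y)`
    obtain ⟨k, -, hk⟩ := exists_le_card_fiber_of_mul_le_card_of_maps_to (s := S.erase x₀)
      (f := c x₀) (n := N) (fun _ _ => mem_univ _) ⟨c x₀ x₀, mem_univ _⟩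
      (by rw [card_univ, card_erase_of_mem (S.min'_mem hSne)]; omega)
    obtain ⟨x, hx, hxS, f, hf⟩ := hN c _ hk
    have hx₀ : ∀ i, x₀ < x i ∧ x i ∈ S ∧ c x₀ (x i) = k := fun i => by
      obtain ⟨hxi, hc⟩ : x i ∈ S.erase x₀ ∧ c x₀ (x i) = k := mem_filter.1 (hxS i)
      exact ⟨S.min'_lt_of_mem_erase_min' hSne hxi, mem_of_mem_erase hxi, hc⟩
    refine ⟨Fin.cons x₀ x, Fin.strictMono_cons.2 ⟨fun i => (hx₀ i).1, hx⟩,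
      Fin.cases (S.min'_mem hSne) fun i => (hx₀ i).2.1, Fin.cons k f, ?_⟩
    intro i j hij
    induction j using Fin.cases with
    | zero => exact absurd hij (Fin.not_lt_zero i)
    | succ j =>
      induction i using Fin.cases with
      | zero => simpa using (hx₀ j).2.2
      | succ i => simpa using hf i j (Fin.succ_lt_succ_iff.1 hij)

theorem exists_orderEmbedding_color_eq_of_lt (κ : Type*) [Fintype κ] (k : ℕ) :
    ∃ N : ℕ, ∀ c : Fin N → Fin N → κ,
      ∃ (y : Fin k ↪o Fin N) (col : κ), ∀ i j, i < j → c (y i) (y j) = col := by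
  obtain ⟨N, hN⟩ := exists_strictMono_color_eq_of_lt κ (Fintype.card κ * k + 1)
  refine ⟨N, fun c => ?_⟩
  classical
  obtain ⟨x, hx, -, f, hf⟩ := hN c univ (by simp)
  have : Nonempty κ := ⟨f 0⟩
  obtain ⟨col, hcol⟩ := Fintype.exists_le_card_fiber_of_mul_le_card f (n := k) (by simp)
  obtain ⟨T, hT, hTcard⟩ := exists_subset_card_eq hcol
  let z := T.orderEmbOfFin hTcard
  refine ⟨z.trans (OrderEmbedding.ofStrictMono x hx), col, fun i j hij => ?_⟩
  have hzi : f (z i) = col := (mem_filter.1 (hT (T.orderEmbOfFin_mem hTcard i))).2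
  simpa [hzi] using hf (z i) (z j) (z.strictMono hij)

theorem Finset.exists_injective_of_card_le_card_biUnion_add {ι α : Type*} [Fintype ι]
    [DecidableEq α] (t : ι → Finset α) (d : ℕ) (h : ∀ s : Finset ι, #s ≤ #(s.biUnion t) + d) :
    ∃ s : Finset ι, Fintype.card ι ≤ #s + d ∧
      ∃ f : s → α, Injective f ∧ ∀ i : s, f i ∈ t i := by
  classical
  -- Hall's theorem after adding `d` new elements to every `t i`
  let t' : ι → Finset (α ⊕ Fin d) := fun i => (t i).disjSum univ
  have hall : ∀ s : Finset ι, #s ≤ #(s.biUnion t') := by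
    intro s
    obtain rfl | ⟨i₀, hi₀⟩ := s.eq_empty_or_nonempty
    · simp
    calc #s ≤ #((s.biUnion t).disjSum (univ : Finset (Fin d))) := by
          simpa [card_disjSum] using h s
      _ ≤ #(s.biUnion t') := card_le_card fun x hx => by
          rcases x with a | b
          · simp only [inl_mem_disjSum, mem_biUnion] at hx ⊢
            obtain ⟨i, hi, ha⟩ := hx
            exact ⟨i, hi, inl_mem_disjSum.2 ha⟩
          · exact mem_biUnion.2 ⟨i₀, hi₀, inr_mem_disjSum.2 (mem_univ b)⟩
  obtain ⟨F, hFinj, hFt⟩ := (all_card_le_biUnion_card_iff_exists_injective t').1 hall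
  let s : Finset ι := {i | (F i).isLeft}
  have hcompl : #{i | ¬ (F i).isLeft} ≤ d := by
    have hmaps : ∀ i ∈ ({i | ¬ (F i).isLeft} : Finset ι), F i ∈ univ.image Sum.inr := by
      intro i hi
      obtain ⟨b, hb⟩ := Sum.isRight_iff.1 (by simpa using (mem_filter.1 hi).2)
      exact mem_image.2 ⟨b, mem_univ b, hb.symm⟩
    calc #{i | ¬ (F i).isLeft} ≤ #(univ.image (Sum.inr : Fin d → α ⊕ Fin d)) :=
          card_le_card_of_injOn F hmaps hFinj.injOn
      _ ≤ d := card_image_le.trans_eq (card_fin d)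
  have hs : #s + #{i | ¬ (F i).isLeft} = Fintype.card ι := card_filter_add_card_filter_not _
  refine ⟨s, by omega, fun i => (F i).getLeft (mem_filter.1 i.2).2, fun i j hij => ?_, fun i => ?_⟩
  · exact Subtype.ext (hFinj (by simpa using hij))
  · have := hFt i
    rwa [← Sum.inl_getLeft (F i) (mem_filter.1 i.2).2, inl_mem_disjSum] at this

namespace IsBipartition

variable {V : Type*} {G : SimpleGraph V} {P Q : Set V}

theorem symm (h : IsBipartition G P Q) : IsBipartition G Q P :=
  ⟨Set.union_comm P Q ▸ h.1, h.2.1.symm, h.2.2.2, h.2.2.1⟩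

theorem mem_or_mem (h : IsBipartition G P Q) (v : V) : v ∈ P ∨ v ∈ Q :=
  Set.mem_union v P Q |>.1 (h.1 ▸ Set.mem_univ v)

theorem not_adj_of_mem_left (h : IsBipartition G P Q) {x y : V} (hx : x ∈ P) (hy : y ∈ P) :
    ¬ G.Adj x y := fun hxy => h.2.2.1 hx hy hxy.ne hxy

theorem mem_right_of_adj (h : IsBipartition G P Q) {x y : V} (hx : x ∈ P) (hxy : G.Adj x y) :
    y ∈ Q :=
  (h.mem_or_mem y).resolve_left fun hy => h.not_adj_of_mem_left hx hy hxy

theorem neighborSet_subset (h : IsBipartition G P Q) {v : V} (hv : v ∈ P) :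
    G.neighborSet v ⊆ Q := fun _ => h.mem_right_of_adj hv

end IsBipartition

namespace IrreducibleBip

variable {V : Type*} {G : SimpleGraph V} {W B : Set V}

theorem ncard_le_ncard_nset_inter_add_one_of_subset_left (h : IrreducibleBip G W B) {S : Set V}
    (hS : S ⊆ W) : S.ncard ≤ (NSet G S ∩ B).ncard + 1 := by
  obtain rfl | hne := S.eq_empty_or_nonempty
  · simp
  · exact (h.2.2.1 S hS hne).le.trans (Nat.le_succ _)

theorem ncard_le_ncard_nset_inter_add_one_of_subset_right [Finite V] (h : IrreducibleBip G W B)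
    {S : Set V} (hS : S ⊆ B) : S.ncard ≤ (NSet G S ∩ W).ncard + 1 := by
  obtain ⟨-, hcard, hexp, -⟩ := h
  by_cases hW : W ⊆ NSet G S
  · rw [Set.inter_eq_self_of_subset_right hW, hcard]
    exact Set.ncard_le_ncard hS
  -- condition (b) for the vertices of `W` not seen from `S`, whose neighborhood avoids `S`
  obtain ⟨w, hwW, hwS⟩ := Set.not_subset.1 hW
  have hlt := hexp (W \ NSet G S) Set.sdiff_subset ⟨w, hwW, hwS⟩
  have hsub : NSet G (W \ NSet G S) ∩ B ⊆ B \ S := by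
    rintro b ⟨⟨w', hw', hadj⟩, hb⟩
    exact ⟨hb, fun hbS => hw'.2 ⟨b, hbS, hadj.symm⟩⟩
  have h₁ := Set.ncard_le_ncard hsub
  have h₂ : (W \ NSet G S).ncard = W.ncard - (NSet G S ∩ W).ncard := by
    rw [← Set.sdiff_inter_self_eq_sdiff, Set.ncard_sdiff Set.inter_subset_right]
  have h₃ := Set.ncard_le_ncard (Set.inter_subset_right : NSet G S ∩ W ⊆ W)
  have h₄ := Set.ncard_le_ncard hS
  rw [Set.ncard_sdiff hS] at h₁
  omega

end IrreducibleBip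

section Fan

variable {V ι κ : Type*} {G : SimpleGraph V}

structure IsMatchedFan (G : SimpleGraph V) (v : V) (a u : ι → V) : Prop where
  injective_left : Injective a
  injective_right : Injective u
  adj_center : ∀ i, G.Adj v (a i)
  adj_match : ∀ i, G.Adj (a i) (u i)
  right_ne_center : ∀ i, u i ≠ v
  not_adj_center_right : ∀ i, ¬ G.Adj v (u i)
  not_adj_left : ∀ i j, ¬ G.Adj (a i) (a j)
  not_adj_right : ∀ i j, ¬ G.Adj (u i) (u j)

namespace IsMatchedFan

variable {v : V} {a u : ι → V}

theorem comp (h : IsMatchedFan G v a u) {e : κ → ι} (he : Injective e) :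
    IsMatchedFan G v (a ∘ e) (u ∘ e) where
  injective_left := h.injective_left.comp he
  injective_right := h.injective_right.comp he
  adj_center i := h.adj_center (e i)
  adj_match i := h.adj_match (e i)
  right_ne_center i := h.right_ne_center (e i)
  not_adj_center_right i := h.not_adj_center_right (e i)
  not_adj_left i j := h.not_adj_left (e i) (e j)
  not_adj_right i j := h.not_adj_right (e i) (e j)

theorem left_ne_center (h : IsMatchedFan G v a u) (i : ι) : a i ≠ v :=
  (h.adj_center i).ne.symm

theorem left_ne_right (h : IsMatchedFan G v a u) (i j : ι) : a i ≠ u j := fun hij =>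
  h.not_adj_center_right j (hij ▸ h.adj_center i)

end IsMatchedFan

end Fan

section Embeddings

variable {V : Type*} {G : SimpleGraph V}

theorem nonempty_completeBipartiteGraph_embedding_of_forall_adj {p q : ℕ} {a : Fin p → V}
    {b : Fin q → V}
    (ha : Injective a) (hb : Injective b) (hab : ∀ i j, G.Adj (a i) (b j))
    (haa : ∀ i j, ¬ G.Adj (a i) (a j)) (hbb : ∀ i j, ¬ G.Adj (b i) (b j)) :
    Nonempty (completeBipartiteGraph (Fin p) (Fin q) ↪g G) := by
  refine ⟨⟨⟨Sum.elim a b, ?_⟩, ?_⟩⟩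
  · rintro (i | i) (j | j) h <;> simp only [Sum.elim_inl, Sum.elim_inr] at h
    · rw [ha h]
    · exact absurd h (hab i j).ne
    · exact absurd h (hab j i).ne.symm
    · rw [hb h]
  · intro x y
    change G.Adj (Sum.elim a b x) (Sum.elim a b y) ↔ _
    rcases x with i | i <;> rcases y with j | j <;> simp [haa, hbb, hab, G.adj_comm (b _)]

theorem simpleTree_adj {k : ℕ} {x y : Fin (2 * k + 1)} :
    (simpleTree k).Adj x y ↔
      (x.val = 0 ∧ 1 ≤ y.val ∧ y.val ≤ k) ∨ (y.val = 0 ∧ 1 ≤ x.val ∧ x.val ≤ k) ∨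
      (1 ≤ x.val ∧ x.val ≤ k ∧ y.val = x.val + k) ∨
      (1 ≤ y.val ∧ y.val ≤ k ∧ x.val = y.val + k) := by
  rw [simpleTree, SimpleGraph.fromRel_adj, ne_eq, Fin.ext_iff]
  omega

def simpleTreeMap {t : ℕ} (v : V) (a u : Fin t → V) (x : Fin (2 * t + 1)) : V :=
  if h₀ : x.val = 0 then v
  else if h : x.val ≤ t then a ⟨x.val - 1, by omega⟩
  else u ⟨x.val - 1 - t, by omega⟩

theorem simpleTreeMap_cases {t : ℕ} (v : V) (a u : Fin t → V) (x : Fin (2 * t + 1)) :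
    (x.val = 0 ∧ simpleTreeMap v a u x = v) ∨
      (∃ i : Fin t, x.val = i.val + 1 ∧ simpleTreeMap v a u x = a i) ∨
      (∃ i : Fin t, x.val = i.val + 1 + t ∧ simpleTreeMap v a u x = u i) := by
  unfold simpleTreeMap
  by_cases h₀ : x.val = 0
  · simp [h₀]
  by_cases ht : x.val ≤ t
  · exact Or.inr (Or.inl ⟨⟨x.val - 1, by omega⟩, by simp only; omega, by simp [h₀, ht]⟩)
  · exact Or.inr (Or.inr ⟨⟨x.val - 1 - t, by omega⟩, by simp only; omega, by simp [h₀, ht]⟩)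

theorem IsMatchedFan.nonempty_simpleTree_embedding {t : ℕ} {v : V} {a u : Fin t → V}
    (h : IsMatchedFan G v a u) (hau : ∀ i j, G.Adj (a i) (u j) ↔ i = j) :
    Nonempty (simpleTree t ↪g G) := by
  refine ⟨⟨⟨simpleTreeMap v a u, fun x y hxy => ?_⟩, fun {x y} => ?_⟩⟩
  · rcases simpleTreeMap_cases v a u x with ⟨hx, ex⟩ | ⟨i, hx, ex⟩ | ⟨i, hx, ex⟩ <;>
      rcases simpleTreeMap_cases v a u y with ⟨hy, ey⟩ | ⟨j, hy, ey⟩ | ⟨j, hy, ey⟩ <;>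
      rw [ex, ey] at hxy
    all_goals
      simp only [h.injective_left.eq_iff, h.injective_right.eq_iff, h.left_ne_center,
        (h.left_ne_center _).symm, h.right_ne_center, (h.right_ne_center _).symm,
        h.left_ne_right, (h.left_ne_right _ _).symm] at hxy
    all_goals (try subst hxy); exact Fin.ext (by omega)
  · change G.Adj (simpleTreeMap v a u x) (simpleTreeMap v a u y) ↔ _
    rw [simpleTree_adj]
    rcases simpleTreeMap_cases v a u x with ⟨hx, ex⟩ | ⟨i, hx, ex⟩ | ⟨i, hx, ex⟩ <;>
      rcases simpleTreeMap_cases v a u y with ⟨hy, ey⟩ | ⟨j, hy, ey⟩ | ⟨j, hy, ey⟩ <;>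
      rw [ex, ey, hx, hy] <;>
      simp only [G.adj_comm (u _) (a _), G.adj_comm (a _) v, G.adj_comm (u _) v, hau,
        h.adj_center, h.not_adj_center_right, h.not_adj_left, h.not_adj_right, G.irrefl,
        Fin.ext_iff] <;>
      grind

theorem IsMatchedFan.nonempty_completeBipartiteGraph_embedding {t : ℕ} {v : V}
    {a u : Fin (t + t) → V} (h : IsMatchedFan G v a u)
    (hadj : ∀ i j, i < j → G.Adj (a i) (u j)) :
    Nonempty (completeBipartiteGraph (Fin (t - 1)) (Fin t) ↪g G) :=
  nonempty_completeBipartiteGraph_embedding_of_forall_adj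
    (h.injective_left.comp (Fin.castLE_injective (by omega)))
    (h.injective_right.comp (Fin.natAdd_injective t t))
    (fun i j => hadj _ _ (by simp only [Fin.lt_def, Fin.val_castLE, Fin.val_natAdd]; omega))
    (fun _ _ => h.not_adj_left _ _) (fun _ _ => h.not_adj_right _ _)

end Embeddings

section MatchedFan

variable {V : Type*} {G : SimpleGraph V}

theorem exists_isMatchedFan [Finite V] {P Q : Set V} (hG : IsBipartition G P Q) {v : V}
    (hv : v ∈ P) (hexp : ∀ S ⊆ G.neighborSet v, S.ncard ≤ (NSet G S ∩ P).ncard + 1) {n : ℕ}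
    (hn : n + 2 ≤ (G.neighborSet v).ncard) :
    ∃ a u : Fin n → V, IsMatchedFan G v a u := by
  classical
  have := Fintype.ofFinite V
  let t : G.neighborSet v → Finset V := fun x => (G.neighborSet x ∩ (P \ {v})).toFinite.toFinset
  have hall : ∀ s : Finset (G.neighborSet v), #s ≤ #(s.biUnion t) + 2 := by
    intro s
    set S : Set V := Subtype.val '' (s : Set (G.neighborSet v))
    have hS : S.ncard = #s :=
      (Set.ncard_image_of_injective _ Subtype.val_injective).trans (Set.ncard_coe_finset s)
    have hst : ((s.biUnion t : Finset V) : Set V) = (NSet G S ∩ P) \ {v} := by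
      ext y
      simp only [t, S, NSet, coe_biUnion, Set.mem_iUnion, Set.Finite.coe_toFinset, mem_coe,
        Set.mem_inter_iff, Set.mem_sdiff, Set.mem_image, mem_neighborSet, exists_prop]
      grind
    calc #s = S.ncard := hS.symm
      _ ≤ (NSet G S ∩ P).ncard + 1 := hexp S (by rintro _ ⟨x, -, rfl⟩; exact x.2)
      _ ≤ ((NSet G S ∩ P) \ {v}).ncard + 1 + 1 := by
        gcongr
        simpa using Set.ncard_le_ncard_sdiff_add_ncard (NSet G S ∩ P) {v}
      _ = #(s.biUnion t) + 2 := by rw [← hst, Set.ncard_coe_finset]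
  obtain ⟨s, hs, f, hf, hft⟩ := Finset.exists_injective_of_card_le_card_biUnion_add t 2 hall
  have hcard : Fintype.card (G.neighborSet v) = (G.neighborSet v).ncard := by
    rw [← Nat.card_eq_fintype_card, Nat.card_coe_set_eq]
  obtain ⟨e⟩ : Nonempty (Fin n ↪ s) :=
    Function.Embedding.nonempty_of_card_le (by rw [Fintype.card_fin, Fintype.card_coe]; omega)
  have hmem : ∀ i, G.Adj (e i).1 (f (e i)) ∧ f (e i) ∈ P ∧ f (e i) ≠ v := fun i => by
    simpa [t] using hft (e i)
  have hQ : ∀ i, ((e i).1 : V) ∈ Q := fun i => hG.mem_right_of_adj hv (e i).1.2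
  exact ⟨fun i => (e i).1, fun i => f (e i),
    { injective_left := fun i j hij => e.injective (Subtype.ext (Subtype.ext hij))
      injective_right := hf.comp e.injective
      adj_center := fun i => (e i).1.2
      adj_match := fun i => (hmem i).1
      right_ne_center := fun i => (hmem i).2.2
      not_adj_center_right := fun i => hG.not_adj_of_mem_left hv (hmem i).2.1
      not_adj_left := fun i j => hG.symm.not_adj_of_mem_left (hQ i) (hQ j)
      not_adj_right := fun i j => hG.not_adj_of_mem_left (hmem i).2.1 (hmem j).2.1 }⟩

end MatchedFan

theorem exists_ncard_neighborSet_le (t : ℕ) :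
    ∃ D : ℕ, ∀ {V : Type*} [Finite V] (G : SimpleGraph V) (P Q : Set V),
      IsBipartition G P Q → ∀ v ∈ P,
      (∀ S ⊆ G.neighborSet v, S.ncard ≤ (NSet G S ∩ P).ncard + 1) →
      IsEmpty (completeBipartiteGraph (Fin (t - 1)) (Fin t) ↪g G) →
      IsEmpty (simpleTree t ↪g G) →
      (G.neighborSet v).ncard ≤ D := by
  obtain ⟨N, hN⟩ := exists_orderEmbedding_color_eq_of_lt (Prop × Prop) (t + t)
  refine ⟨N + 1, fun G P Q hG v hv hexp hK hT => ?_⟩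
  by_contra! hdeg
  obtain ⟨a, u, hF⟩ := exists_isMatchedFan hG hv hexp (n := N) (by omega)
  -- color a pair `i < j` by which of the two cross edges `a i u j`, `a j u i` are present
  obtain ⟨y, ⟨p, q⟩, hy⟩ := hN fun i j => (G.Adj (a i) (u j), G.Adj (a j) (u i))
  have hFy := hF.comp y.injective
  by_cases hp : p
  · refine hK.false (hFy.nonempty_completeBipartiteGraph_embedding fun i j hij => ?_).some
    exact (congrArg Prod.fst (hy i j hij)).mpr hp
  by_cases hq : q
  · refine hK.false ((hFy.comp Fin.rev_injective).nonempty_completeBipartiteGraph_embedding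
      fun i j hij => ?_).some
    exact (congrArg Prod.snd (hy _ _ (Fin.rev_lt_rev.2 hij))).mpr hq
  refine hT.false ((hFy.comp (Fin.castAdd_injective t t)).nonempty_simpleTree_embedding
    fun i j => ?_).some
  rcases lt_trichotomy i j with hij | rfl | hij
  · refine iff_of_false (fun h => hp ?_) hij.ne
    exact (congrArg Prod.fst (hy _ _ (Fin.strictMono_castAdd t hij))).mp h
  · exact iff_of_true (hFy.adj_match _) rfl
  · refine iff_of_false (fun h => hq ?_) hij.ne'
    exact (congrArg Prod.snd (hy _ _ (Fin.strictMono_castAdd t hij))).mp h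

theorem statement6_general (t : ℕ) :
    ∃ D : ℕ, ∀ (V : Type) [Fintype V] (G : SimpleGraph V) (W B : Set V),
      IrreducibleBip G W B →
      IsEmpty (completeBipartiteGraph (Fin (t - 1)) (Fin t) ↪g G) →
      IsEmpty (simpleTree t ↪g G) →
      ∀ v : V, (G.neighborSet v).ncard ≤ D := by
  obtain ⟨D, hD⟩ := exists_ncard_neighborSet_le t
  refine ⟨D, fun V _ G W B hG hK hT v => ?_⟩
  rcases hG.1.mem_or_mem v with hv | hv
  · exact hD G W B hG.1 v hv (fun S hS => hG.ncard_le_ncard_nset_inter_add_one_of_subset_right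
      (hS.trans (hG.1.neighborSet_subset hv))) hK hT
  · exact hD G B W hG.1.symm v hv (fun S hS => hG.ncard_le_ncard_nset_inter_add_one_of_subset_left
      (hS.trans (hG.1.symm.neighborSet_subset hv))) hK hT

/-- For every `t ≥ 1` there is a bound `D` such that every irreducible bipartite graph
containing no induced `K_{t-1,t}` and no induced simple tree `T_t` has maximum
degree at most `D`. -/
theorem statement6 (t : ℕ) (ht : 1 ≤ t) :
    ∃ D : ℕ, ∀ (V : Type) [Fintype V] (G : SimpleGraph V) (W B : Set V),
      IrreducibleBip G W B →
      IsEmpty (completeBipartiteGraph (Fin (t - 1)) (Fin t) ↪g G) →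
      IsEmpty (simpleTree t ↪g G) →
      ∀ v : V, (G.neighborSet v).ncard ≤ D :=
  statement6_general t
end

section
/- Let G be a finite bipartite S_{1,1,3}-free graph and let T be an inclusionwise maximal induced copy of the simple tree T_k in G with k ≥ 3, with centre u, A_0 = {a_1,...,a_k} the neighbours of u in T, and B_0 = {b_1,...,b_k} the leaves of T with a_i adjacent to b_i. Define B_1 = N(B_0)\A_0; B_1' ⊆ B_1 the set of vertices not in A_0 with exactly one neighbour in B_0; B_1'' ⊆ B_1 the set of vertices adjacent to all vertices of B_0; A_1 = N(A_0)\({u} ∪ B_0); C = N(u)\(A_0 ∪ B_1); D_1 = N(A_1)\(C ∪ A_0 ∪ B_1); D_2 = N(B_1)\({u} ∪ B_0 ∪ A_1). Then: (i) every vertex of B_1 is adjacent to u; (ii) every vertex of A_1 is adjacent to every vertex of A_0; (iii) no vertex of C has a neighbour outside {u} ∪ A_1; (iv) no vertex of D_1 has a neighbour outside A_1; (v) B_1 = B_1' ∪ B_1''; (vi) B_1' = ∅ or B_1'' = ∅; (vii) no vertex of B_1' has a neighbour outside {u} ∪ B_0 ∪ A_1; (viii) no vertex of D_2 has a neighbour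 outside B_1. -/
open SimpleGraph

/-- `(u, a, b)` is an induced copy of the simple tree `T_k` in `G`: `u` is the centre,
`a i` are the neighbours of `u`, `b i` are the leaves with `a i` adjacent to `b i`,
all vertices are distinct, and there are no other adjacencies among these vertices. -/
def IsSimpleTreeCopy {V : Type*} (G : SimpleGraph V) (k : ℕ) (u : V)
    (a b : Fin k → V) : Prop :=
  Function.Injective a ∧ Function.Injective b ∧
  (∀ i, a i ≠ u) ∧ (∀ i, b i ≠ u) ∧ (∀ i j, a i ≠ b j) ∧
  (∀ i, G.Adj u (a i)) ∧ (∀ i, G.Adj (a i) (b i)) ∧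
  (∀ i, ¬ G.Adj u (b i)) ∧
  (∀ i j, i ≠ j → ¬ G.Adj (a i) (a j)) ∧
  (∀ i j, i ≠ j → ¬ G.Adj (b i) (b j)) ∧
  (∀ i j, i ≠ j → ¬ G.Adj (a i) (b j))

/-- The vertex set of the tree copy `(u, a, b)`. -/
def treeVerts {V : Type*} (k : ℕ) (u : V) (a b : Fin k → V) : Set V :=
  {u} ∪ Set.range a ∪ Set.range b

/-- The copy `(u, a, b)` of `T_k` is inclusionwise maximal among induced copies of
simple trees in `G`. -/
def MaximalSimpleTreeCopy {V : Type*} (G : SimpleGraph V) (k : ℕ) (u : V)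
    (a b : Fin k → V) : Prop :=
  IsSimpleTreeCopy G k u a b ∧
  ∀ (m : ℕ) (u' : V) (a' b' : Fin m → V), IsSimpleTreeCopy G m u' a' b' →
    treeVerts k u a b ⊆ treeVerts m u' a' b' →
    treeVerts k u a b = treeVerts m u' a' b'

/-!
Fix a proper 2-colouring of `G`. Every claim is proved by contradiction: a violation produces
either an induced `S_{1,1,3}` built from `u`, a few `a i`, `b i` and the offending vertices, or,
for (iii), a pendant path `u v w` that extends the copy of `T_k` to an induced `T_{k+1}`,
contradicting maximality. Claim (viii) reduces to (iii) when the far endpoint is adjacent to `u`.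
-/

theorem IsBipartition.isBipartite {V : Type*} {G : SimpleGraph V} {W B : Set V}
    (h : IsBipartition G W B) : G.IsBipartite := by
  obtain ⟨hcover, hdisj, hW, hB⟩ := h
  refine IsBipartiteWith.isBipartite (s := W) (t := B) ⟨hdisj, fun v w hvw => ?_⟩
  have hv : v ∈ W ∪ B := hcover ▸ Set.mem_univ v
  have hw : w ∈ W ∪ B := hcover ▸ Set.mem_univ w
  rcases hv with hv | hv <;> rcases hw with hw | hw
  · exact absurd hvw (hW hv hw hvw.ne)
  · exact .inl ⟨hv, hw⟩
  · exact .inr ⟨hv, hw⟩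
  · exact absurd hvw (hB hv hw hvw.ne)

theorem Fin.exists_pair_ne_ne_of_three_le {k : ℕ} (hk : 3 ≤ k) (i : Fin k) :
    ∃ j l : Fin k, j ≠ i ∧ l ≠ i ∧ j ≠ l := by
  have hcard : 1 < (Finset.univ.erase i).card := by
    rw [Finset.card_erase_of_mem (Finset.mem_univ i), Finset.card_fin]
    omega
  obtain ⟨j, hj, l, hl, hjl⟩ := Finset.one_lt_card.1 hcard
  exact ⟨j, l, Finset.ne_of_mem_erase hj, Finset.ne_of_mem_erase hl, hjl⟩

namespace SimpleGraph.Coloring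

variable {V : Type*} {G : SimpleGraph V}

theorem eq_of_adj_of_adj (c : G.Coloring (Fin 2)) {x y z : V} (hxy : G.Adj x y)
    (hyz : G.Adj y z) : c x = c z := by
  have := c.valid hxy
  have := c.valid hyz
  omega

theorem not_adj_of_eq (c : G.Coloring (Fin 2)) {x y : V} (h : c x = c y) : ¬ G.Adj x y :=
  fun hxy => c.valid hxy h

/-- For an induced `S_{1,1,3}` with centre `x`, leaves `l₁, l₂` and path `x p₁ p₂ p₃` in a
bipartite graph, only the non-edges between vertices at odd distance and the distinctness of
vertices at even distance need checking: the colouring supplies the rest. -/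
theorem nonempty_S113_embedding (c : G.Coloring (Fin 2)) {x l₁ l₂ p₁ p₂ p₃ : V}
    (hl₁ : G.Adj x l₁) (hl₂ : G.Adj x l₂) (hp₁ : G.Adj x p₁) (hp₂ : G.Adj p₁ p₂)
    (hp₃ : G.Adj p₂ p₃) (nl₁ : ¬ G.Adj l₁ p₂) (nl₂ : ¬ G.Adj l₂ p₂) (nx : ¬ G.Adj x p₃)
    (dl : l₁ ≠ l₂) (dl₁ : l₁ ≠ p₁) (dl₂ : l₂ ≠ p₁) (dl₁' : l₁ ≠ p₃) (dl₂' : l₂ ≠ p₃)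
    (dx : x ≠ p₂) (dp : p₁ ≠ p₃) :
    Nonempty (S113 ↪g G) := by
  have e₁ := c.eq_of_adj_of_adj hl₁.symm hl₂
  have e₂ := c.eq_of_adj_of_adj hl₁.symm hp₁
  have e₃ := c.eq_of_adj_of_adj hp₁ hp₂
  have e₄ := c.eq_of_adj_of_adj hp₂ hp₃
  have : ¬ G.Adj l₁ l₂ := c.not_adj_of_eq e₁
  have : ¬ G.Adj l₁ p₁ := c.not_adj_of_eq e₂
  have : ¬ G.Adj l₂ p₁ := c.not_adj_of_eq (e₁.symm.trans e₂)
  have : ¬ G.Adj x p₂ := c.not_adj_of_eq e₃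
  have : ¬ G.Adj l₁ p₃ := c.not_adj_of_eq (e₂.trans e₄)
  have : ¬ G.Adj l₂ p₃ := c.not_adj_of_eq ((e₁.symm.trans e₂).trans e₄)
  have : ¬ G.Adj p₁ p₃ := c.not_adj_of_eq e₄
  have : l₁ ≠ p₂ := fun h => c.valid hl₁ (by rw [h, e₃])
  have : l₂ ≠ p₂ := fun h => c.valid hl₂ (by rw [h, e₃])
  have : x ≠ p₃ := fun h => c.valid hp₃ (by rw [← h, ← e₃])
  have hinj : Function.Injective ![x, l₁, l₂, p₁, p₂, p₃] := by
    intro i j h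
    fin_cases i <;> fin_cases j <;> simp at h ⊢ <;>
      first
        | exact absurd h (by assumption)
        | exact absurd h.symm (by assumption)
        | exact absurd h (G.ne_of_adj (by assumption))
        | exact absurd h.symm (G.ne_of_adj (by assumption))
  refine ⟨⟨⟨_, hinj⟩, fun {i j} => ?_⟩⟩
  change G.Adj (![x, l₁, l₂, p₁, p₂, p₃] i) (![x, l₁, l₂, p₁, p₂, p₃] j) ↔ S113.Adj i j
  fin_cases i <;> fin_cases j <;> simp [S113] <;>
    first
      | assumption
      | exact Adj.symm (by assumption)
      | exact mt Adj.symm (by assumption)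

end SimpleGraph.Coloring

-- The sets `B1, B1', B1'', A1, C, D1, D2` of the statement, with `A0 = range a`, `B0 = range b`.
namespace TreeNbhd

variable {V : Type*} (G : SimpleGraph V) {k : ℕ} (u : V) (a b : Fin k → V)

def B₁ : Set V := NSet G (Set.range b) \ Set.range a

def B₁' : Set V := {v | v ∈ B₁ G a b ∧ ∃! w, w ∈ Set.range b ∧ G.Adj v w}

def B₁'' : Set V := {v | v ∈ B₁ G a b ∧ ∀ w ∈ Set.range b, G.Adj v w}

def A₁ : Set V := NSet G (Set.range a) \ ({u} ∪ Set.range b)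

def C : Set V := G.neighborSet u \ (Set.range a ∪ B₁ G a b)

def D₁ : Set V := NSet G (A₁ G u a b) \ (C G u a b ∪ Set.range a ∪ B₁ G a b)

def D₂ : Set V := NSet G (B₁ G a b) \ ({u} ∪ Set.range b ∪ A₁ G u a b)

variable {G u a b} {v : V}

theorem mem_B₁ : v ∈ B₁ G a b ↔ (∃ i, G.Adj v (b i)) ∧ v ∉ Set.range a := by
  simp [B₁, NSet, G.adj_comm]

theorem mem_B₁_of_adj {i : Fin k} (h : G.Adj v (b i)) (hv : v ∉ Set.range a) : v ∈ B₁ G a b :=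
  mem_B₁.2 ⟨⟨i, h⟩, hv⟩

theorem mem_A₁ : v ∈ A₁ G u a b ↔ (∃ i, G.Adj v (a i)) ∧ v ≠ u ∧ v ∉ Set.range b := by
  simp [A₁, NSet, G.adj_comm]

theorem mem_A₁_of_adj {i : Fin k} (h : G.Adj v (a i)) (hu : v ≠ u) (hv : v ∉ Set.range b) :
    v ∈ A₁ G u a b :=
  mem_A₁.2 ⟨⟨i, h⟩, hu, hv⟩

theorem mem_C : v ∈ C G u a b ↔ G.Adj u v ∧ v ∉ Set.range a ∧ v ∉ B₁ G a b := by
  simp [C]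

end TreeNbhd

open TreeNbhd Set

namespace IsSimpleTreeCopy

variable {V : Type*} {G : SimpleGraph V} {k : ℕ} {u : V} {a b : Fin k → V} {v w : V}

theorem injective_a (hT : IsSimpleTreeCopy G k u a b) : Function.Injective a := hT.1

theorem injective_b (hT : IsSimpleTreeCopy G k u a b) : Function.Injective b := hT.2.1

theorem b_ne_centre (hT : IsSimpleTreeCopy G k u a b) (i : Fin k) : b i ≠ u := hT.2.2.2.1 i

theorem adj_centre_a (hT : IsSimpleTreeCopy G k u a b) (i : Fin k) : G.Adj u (a i) :=
  hT.2.2.2.2.2.1 i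

theorem adj_a_b (hT : IsSimpleTreeCopy G k u a b) (i : Fin k) : G.Adj (a i) (b i) :=
  hT.2.2.2.2.2.2.1 i

theorem not_adj_a_b (hT : IsSimpleTreeCopy G k u a b) {i j : Fin k} (hij : i ≠ j) :
    ¬ G.Adj (a i) (b j) :=
  hT.2.2.2.2.2.2.2.2.2.2 i j hij

theorem snoc (hT : IsSimpleTreeCopy G k u a b) (huv : G.Adj u v) (hvw : G.Adj v w)
    (hvA : v ∉ range a) (hvB : v ∉ range b) (hwA : w ∉ range a) (hwB : w ∉ range b)
    (hwu : w ≠ u) (huw : ¬ G.Adj u w) (hav : ∀ i, ¬ G.Adj (a i) v)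
    (haw : ∀ i, ¬ G.Adj (a i) w) (hvb : ∀ i, ¬ G.Adj v (b i)) (hbw : ∀ i, ¬ G.Adj (b i) w) :
    IsSimpleTreeCopy G (k + 1) u (Fin.snoc a v) (Fin.snoc b w) := by
  obtain ⟨ha, hb, hau, hbu, hab, hua, hadj, hub, haa, hbb, hnab⟩ := hT
  refine ⟨Fin.snoc_injective_of_injective ha hvA, Fin.snoc_injective_of_injective hb hwB,
    ?_, ?_, ?_, ?_, ?_, ?_, ?_, ?_, ?_⟩ <;>
    simp only [Fin.forall_fin_succ', Fin.snoc_castSucc, Fin.snoc_last, ne_eq, Fin.castSucc_inj,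
      Fin.castSucc_ne_last, (Fin.castSucc_ne_last _).symm, not_false_eq_true, forall_const,
      not_true_eq_false, IsEmpty.forall_iff]
  · exact ⟨hau, huv.ne'⟩
  · exact ⟨hbu, hwu⟩
  · exact ⟨fun i => ⟨hab i, fun h => hwA ⟨i, h⟩⟩, fun i h => hvB ⟨i, h.symm⟩, hvw.ne⟩
  · exact ⟨hua, huv⟩
  · exact ⟨hadj, hvw⟩
  · exact ⟨hub, huw⟩
  · exact ⟨fun i => ⟨haa i, hav i⟩, fun i h => hav i h.symm, trivial⟩
  · exact ⟨fun i => ⟨hbb i, hbw i⟩, fun i h => hbw i h.symm, trivial⟩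
  · exact ⟨fun i => ⟨hnab i, haw i⟩, hvb, trivial⟩

theorem adj_centre_of_mem_B₁ (hT : IsSimpleTreeCopy G k u a b) (c : G.Coloring (Fin 2))
    (hfree : IsEmpty (S113 ↪g G)) (hk : 3 ≤ k) (hv : v ∈ B₁ G a b) : G.Adj u v := by
  obtain ⟨⟨i, hvi⟩, hvA⟩ := mem_B₁.1 hv
  obtain ⟨j, l, hji, hli, hjl⟩ := Fin.exists_pair_ne_ne_of_three_le hk i
  by_contra huv
  -- centre `u`, leaves `a j`, `a l`, path `a i, b i, v`
  exact (c.nonempty_S113_embedding (hT.adj_centre_a j) (hT.adj_centre_a l) (hT.adj_centre_a i)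
    (hT.adj_a_b i) hvi.symm (hT.not_adj_a_b hji) (hT.not_adj_a_b hli) huv
    (hT.injective_a.ne hjl) (hT.injective_a.ne hji) (hT.injective_a.ne hli)
    (ne_of_mem_of_not_mem (mem_range_self j) hvA) (ne_of_mem_of_not_mem (mem_range_self l) hvA)
    (hT.b_ne_centre i).symm (ne_of_mem_of_not_mem (mem_range_self i) hvA)).elim hfree.false

theorem adj_a_of_mem_A₁ (hT : IsSimpleTreeCopy G k u a b) (c : G.Coloring (Fin 2))
    (hfree : IsEmpty (S113 ↪g G)) (hv : v ∈ A₁ G u a b) (i : Fin k) : G.Adj v (a i) := by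
  obtain ⟨⟨j, hvj⟩, hvu, hvB⟩ := mem_A₁.1 hv
  by_cases hij : i = j
  · exact hij ▸ hvj
  by_contra hvi
  -- centre `a j`, leaves `b j`, `v`, path `u, a i, b i`
  exact (c.nonempty_S113_embedding (hT.adj_a_b j) hvj.symm (hT.adj_centre_a j).symm
    (hT.adj_centre_a i) (hT.adj_a_b i) (mt Adj.symm (hT.not_adj_a_b hij)) hvi
    (hT.not_adj_a_b (Ne.symm hij)) (ne_of_mem_of_not_mem (mem_range_self j) hvB)
    (hT.b_ne_centre j) hvu (hT.injective_b.ne (Ne.symm hij))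
    (ne_of_mem_of_not_mem (mem_range_self i) hvB).symm (hT.injective_a.ne (Ne.symm hij))
    (hT.b_ne_centre i).symm).elim hfree.false

theorem mem_A₁_of_mem_D₁_of_adj (hT : IsSimpleTreeCopy G k u a b) (c : G.Coloring (Fin 2))
    (hfree : IsEmpty (S113 ↪g G)) (hv : v ∈ D₁ G u a b) (hvw : G.Adj v w) : w ∈ A₁ G u a b := by
  obtain ⟨⟨x, hx, hxv⟩, hv⟩ := hv
  simp only [mem_union, not_or] at hv
  obtain ⟨⟨hvC, hvA⟩, hvB₁⟩ := hv
  obtain ⟨⟨j, hxj⟩, hxu, hxB⟩ := mem_A₁.1 hx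
  have huv : ¬ G.Adj u v := fun h => hvC (mem_C.2 ⟨h, hvA, hvB₁⟩)
  have hvb : ∀ i, ¬ G.Adj v (b i) := fun i h => hvB₁ (mem_B₁_of_adj h hvA)
  by_contra hw
  have hwu : w ≠ u := by
    rintro rfl
    exact huv hvw.symm
  have hwB : w ∉ range b := by
    rintro ⟨i, rfl⟩
    exact hvb i hvw
  have hjw : ¬ G.Adj (a j) w := fun h => hw (mem_A₁_of_adj h.symm hwu hwB)
  -- centre `a j`, leaves `u`, `b j`, path `x, v, w`
  exact (c.nonempty_S113_embedding (hT.adj_centre_a j).symm (hT.adj_a_b j) hxj.symm hxv hvw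
    huv (mt Adj.symm (hvb j)) hjw (hT.b_ne_centre j).symm hxu.symm
    (ne_of_mem_of_not_mem (mem_range_self j) hxB) hwu.symm (fun h => hvb j (h ▸ hvw))
    (ne_of_mem_of_not_mem (mem_range_self j) hvA) (fun h => hjw (h ▸ hxj.symm))).elim
    hfree.false

theorem adj_b_of_adj_two_b (hT : IsSimpleTreeCopy G k u a b) (c : G.Coloring (Fin 2))
    (hfree : IsEmpty (S113 ↪g G)) (hk : 3 ≤ k) (hv : v ∈ B₁ G a b) {i j : Fin k} (hij : i ≠ j)
    (hvi : G.Adj v (b i)) (hvj : G.Adj v (b j)) (l : Fin k) : G.Adj v (b l) := by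
  by_contra hvl
  have hli : l ≠ i := by
    rintro rfl
    exact hvl hvi
  have hlj : l ≠ j := by
    rintro rfl
    exact hvl hvj
  -- centre `v`, leaves `b i`, `b j`, path `u, a l, b l`
  exact (c.nonempty_S113_embedding hvi hvj (hT.adj_centre_of_mem_B₁ c hfree hk hv).symm
    (hT.adj_centre_a l) (hT.adj_a_b l) (mt Adj.symm (hT.not_adj_a_b hli))
    (mt Adj.symm (hT.not_adj_a_b hlj)) hvl (hT.injective_b.ne hij) (hT.b_ne_centre i)
    (hT.b_ne_centre j) (hT.injective_b.ne (Ne.symm hli)) (hT.injective_b.ne (Ne.symm hlj))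
    (ne_of_mem_of_not_mem (mem_range_self l) (mem_B₁.1 hv).2).symm
    (hT.b_ne_centre l).symm).elim hfree.false

theorem B₁_eq_union (hT : IsSimpleTreeCopy G k u a b) (c : G.Coloring (Fin 2))
    (hfree : IsEmpty (S113 ↪g G)) (hk : 3 ≤ k) : B₁ G a b = B₁' G a b ∪ B₁'' G a b := by
  refine Subset.antisymm (fun v hv => ?_) (union_subset (fun v hv => hv.1) (fun v hv => hv.1))
  by_cases hall : ∀ l, G.Adj v (b l)
  · exact .inr ⟨hv, forall_mem_range.2 hall⟩
  obtain ⟨l, hvl⟩ := not_forall.1 hall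
  obtain ⟨⟨i, hvi⟩, -⟩ := mem_B₁.1 hv
  refine .inl ⟨hv, b i, ⟨mem_range_self i, hvi⟩, ?_⟩
  rintro _ ⟨⟨j, rfl⟩, hvj⟩
  by_contra hji
  exact hvl (hT.adj_b_of_adj_two_b c hfree hk hv (fun h => hji (congrArg b h)) hvj hvi l)

theorem B₁'_eq_empty_or_B₁''_eq_empty (hT : IsSimpleTreeCopy G k u a b)
    (c : G.Coloring (Fin 2)) (hfree : IsEmpty (S113 ↪g G)) (hk : 2 ≤ k) :
    B₁' G a b = ∅ ∨ B₁'' G a b = ∅ := by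
  simp only [← not_nonempty_iff_eq_empty, ← not_and_or]
  rintro ⟨⟨x, hx, _, ⟨⟨i, rfl⟩, hxi⟩, huniq⟩, ⟨y, hy, hyb⟩⟩
  have : Nontrivial (Fin k) := Fin.nontrivial_iff_two_le.2 hk
  obtain ⟨j, hji⟩ := exists_ne i
  have hxj : ¬ G.Adj x (b j) := fun h => hji (hT.injective_b (huniq _ ⟨mem_range_self j, h⟩))
  have hyb (l : Fin k) : G.Adj y (b l) := hyb _ (mem_range_self l)
  have hxA := (mem_B₁.1 hx).2
  have hyA := (mem_B₁.1 hy).2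
  -- centre `b i`, leaves `a i`, `x`, path `y, b j, a j`
  exact (c.nonempty_S113_embedding (hT.adj_a_b i).symm hxi.symm (hyb i).symm (hyb j)
    (hT.adj_a_b j).symm (hT.not_adj_a_b (Ne.symm hji)) hxj (mt Adj.symm (hT.not_adj_a_b hji))
    (ne_of_mem_of_not_mem (mem_range_self i) hxA) (ne_of_mem_of_not_mem (mem_range_self i) hyA)
    (fun h => hxj (h ▸ hyb j)) (hT.injective_a.ne (Ne.symm hji))
    (ne_of_mem_of_not_mem (mem_range_self j) hxA).symm (hT.injective_b.ne (Ne.symm hji))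
    (ne_of_mem_of_not_mem (mem_range_self j) hyA).symm).elim hfree.false

theorem mem_of_mem_B₁'_of_adj (hT : IsSimpleTreeCopy G k u a b) (c : G.Coloring (Fin 2))
    (hfree : IsEmpty (S113 ↪g G)) (hk : 3 ≤ k) (hv : v ∈ B₁' G a b) (hvw : G.Adj v w) :
    w ∈ ({u} : Set V) ∪ range b ∪ A₁ G u a b := by
  obtain ⟨hv, _, ⟨⟨i, rfl⟩, hvi⟩, huniq⟩ := hv
  have : Nontrivial (Fin k) := Fin.nontrivial_iff_two_le.2 (by omega)
  obtain ⟨j, hji⟩ := exists_ne i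
  have hvj : ¬ G.Adj v (b j) := fun h => hji (hT.injective_b (huniq _ ⟨mem_range_self j, h⟩))
  by_contra hw
  simp only [mem_union, mem_singleton_iff, not_or] at hw
  obtain ⟨⟨hwu, hwB⟩, hwA₁⟩ := hw
  have hwj : ¬ G.Adj w (a j) := fun h => hwA₁ (mem_A₁_of_adj h hwu hwB)
  -- centre `v`, leaves `b i`, `w`, path `u, a j, b j`
  exact (c.nonempty_S113_embedding hvi hvw (hT.adj_centre_of_mem_B₁ c hfree hk hv).symm
    (hT.adj_centre_a j) (hT.adj_a_b j) (mt Adj.symm (hT.not_adj_a_b hji)) hwj hvj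
    (ne_of_mem_of_not_mem (mem_range_self i) hwB) (hT.b_ne_centre i) hwu
    (hT.injective_b.ne (Ne.symm hji)) (ne_of_mem_of_not_mem (mem_range_self j) hwB).symm
    (ne_of_mem_of_not_mem (mem_range_self j) (mem_B₁.1 hv).2).symm
    (hT.b_ne_centre j).symm).elim hfree.false

end IsSimpleTreeCopy

theorem treeVerts_subset_snoc {V : Type*} {k : ℕ} (u : V) (a b : Fin k → V) (v w : V) :
    treeVerts k u a b ⊆ treeVerts (k + 1) u (Fin.snoc a v) (Fin.snoc b w) := by
  simp only [treeVerts, Fin.range_snoc]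
  gcongr <;> exact subset_insert _ _

namespace MaximalSimpleTreeCopy

variable {V : Type*} {G : SimpleGraph V} {k : ℕ} {u : V} {a b : Fin k → V} {v w : V}

theorem mem_treeVerts_of_snoc (hmax : MaximalSimpleTreeCopy G k u a b)
    (h : IsSimpleTreeCopy G (k + 1) u (Fin.snoc a v) (Fin.snoc b w)) :
    w ∈ treeVerts k u a b := by
  rw [hmax.2 _ _ _ _ h (treeVerts_subset_snoc u a b v w)]
  simp [treeVerts]

theorem mem_of_mem_C_of_adj (hmax : MaximalSimpleTreeCopy G k u a b) (c : G.Coloring (Fin 2))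
    (hv : v ∈ C G u a b) (hvw : G.Adj v w) : w ∈ ({u} : Set V) ∪ A₁ G u a b := by
  have hT := hmax.1
  obtain ⟨huv, hvA, hvB₁⟩ := mem_C.1 hv
  have hvb : ∀ i, ¬ G.Adj v (b i) := fun i h => hvB₁ (mem_B₁_of_adj h hvA)
  have hwB : w ∉ range b := by
    rintro ⟨i, rfl⟩
    exact hvb i hvw
  by_contra hw
  simp only [mem_union, mem_singleton_iff, not_or] at hw
  obtain ⟨hwu, hwA₁⟩ := hw
  have hcw : c w = c u := (c.eq_of_adj_of_adj huv hvw).symm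
  have hca (i : Fin k) : c (a i) ≠ c u := (c.valid (hT.adj_centre_a i)).symm
  have hcb (i : Fin k) : c (b i) = c u :=
    (c.eq_of_adj_of_adj (hT.adj_centre_a i) (hT.adj_a_b i)).symm
  have hwA : w ∉ range a := by
    rintro ⟨i, rfl⟩
    exact hca i hcw
  have hext := hT.snoc huv hvw hvA
    (by rintro ⟨i, rfl⟩; exact c.valid huv (hcb i).symm) hwA hwB hwu
    (c.not_adj_of_eq hcw.symm)
    (fun i => c.not_adj_of_eq (c.eq_of_adj_of_adj (hT.adj_centre_a i).symm huv))
    (fun i h => hwA₁ (mem_A₁_of_adj h.symm hwu hwB)) hvb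
    (fun i => c.not_adj_of_eq ((hcb i).trans hcw.symm))
  have hw := hmax.mem_treeVerts_of_snoc hext
  simp only [treeVerts, mem_union, mem_singleton_iff] at hw
  rcases hw with (hw | hw) | hw
  · exact hwu hw
  · exact hwA hw
  · exact hwB hw

theorem mem_B₁_of_mem_D₂_of_adj (hmax : MaximalSimpleTreeCopy G k u a b)
    (c : G.Coloring (Fin 2)) (hfree : IsEmpty (S113 ↪g G)) (hk : 3 ≤ k) (hv : v ∈ D₂ G u a b)
    (hvw : G.Adj v w) : w ∈ B₁ G a b := by
  have hT := hmax.1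
  obtain ⟨⟨x, hx, hxv⟩, hv⟩ := hv
  simp only [mem_union, mem_singleton_iff, not_or] at hv
  obtain ⟨⟨hvu, hvB⟩, hvA₁⟩ := hv
  have hva : ∀ i, ¬ G.Adj v (a i) := fun i h => hvA₁ (mem_A₁_of_adj h hvu hvB)
  have hwA : w ∉ range a := by
    rintro ⟨i, rfl⟩
    exact hva i hvw
  by_contra hwB₁
  by_cases huw : G.Adj u w
  · have hv := mem_of_mem_C_of_adj hmax c (mem_C.2 ⟨huw, hwA, hwB₁⟩) hvw.symm
    simp only [mem_union, mem_singleton_iff] at hv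
    exact hv.elim hvu hvA₁
  have : Nontrivial (Fin k) := Fin.nontrivial_iff_two_le.2 (by omega)
  obtain ⟨j, l, hjl⟩ := exists_pair_ne (Fin k)
  have hxA := (mem_B₁.1 hx).2
  -- centre `u`, leaves `a j`, `a l`, path `x, v, w`
  exact (c.nonempty_S113_embedding (hT.adj_centre_a j) (hT.adj_centre_a l)
    (hT.adj_centre_of_mem_B₁ c hfree hk hx) hxv hvw (mt Adj.symm (hva j)) (mt Adj.symm (hva l))
    huw (hT.injective_a.ne hjl) (ne_of_mem_of_not_mem (mem_range_self j) hxA)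
    (ne_of_mem_of_not_mem (mem_range_self l) hxA) (ne_of_mem_of_not_mem (mem_range_self j) hwA)
    (ne_of_mem_of_not_mem (mem_range_self l) hwA) (Ne.symm hvu)
    (fun h => hwB₁ (h ▸ hx))).elim hfree.false

end MaximalSimpleTreeCopy

theorem statement10_general {V : Type} (G : SimpleGraph V)
    (hbip : ∃ Wp Bp : Set V, IsBipartition G Wp Bp)
    (hfree : IsEmpty (S113 ↪g G))
    (k : ℕ) (hk : 3 ≤ k) (u : V) (a b : Fin k → V)
    (hmax : MaximalSimpleTreeCopy G k u a b) :
    let A0 : Set V := Set.range a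
    let B0 : Set V := Set.range b
    let B1 : Set V := NSet G B0 \ A0
    let B1' : Set V := {v | v ∈ B1 ∧ ∃! w, w ∈ B0 ∧ G.Adj v w}
    let B1'' : Set V := {v | v ∈ B1 ∧ ∀ w ∈ B0, G.Adj v w}
    let A1 : Set V := NSet G A0 \ ({u} ∪ B0)
    let C : Set V := G.neighborSet u \ (A0 ∪ B1)
    let D1 : Set V := NSet G A1 \ (C ∪ A0 ∪ B1)
    let D2 : Set V := NSet G B1 \ ({u} ∪ B0 ∪ A1)
    (∀ v ∈ B1, G.Adj u v) ∧
    (∀ v ∈ A1, ∀ i, G.Adj v (a i)) ∧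
    (∀ v ∈ C, ∀ w, G.Adj v w → w ∈ ({u} : Set V) ∪ A1) ∧
    (∀ v ∈ D1, ∀ w, G.Adj v w → w ∈ A1) ∧
    (B1 = B1' ∪ B1'') ∧
    (B1' = ∅ ∨ B1'' = ∅) ∧
    (∀ v ∈ B1', ∀ w, G.Adj v w → w ∈ ({u} : Set V) ∪ B0 ∪ A1) ∧
    (∀ v ∈ D2, ∀ w, G.Adj v w → w ∈ B1) := by
  intro A0 B0 B1 B1' B1'' A1 C D1 D2
  obtain ⟨W, B, hWB⟩ := hbip
  obtain ⟨c⟩ := hWB.isBipartite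
  have hT := hmax.1
  exact ⟨fun v => hT.adj_centre_of_mem_B₁ c hfree hk,
    fun v => hT.adj_a_of_mem_A₁ c hfree,
    fun v hv w => hmax.mem_of_mem_C_of_adj c hv,
    fun v hv w => hT.mem_A₁_of_mem_D₁_of_adj c hfree hv,
    hT.B₁_eq_union c hfree hk,
    hT.B₁'_eq_empty_or_B₁''_eq_empty c hfree (by omega),
    fun v hv w => hT.mem_of_mem_B₁'_of_adj c hfree hk hv,
    fun v hv w => hmax.mem_B₁_of_mem_D₂_of_adj c hfree hk hv⟩

/-- Structure around a maximal induced copy of `T_k` (`k ≥ 3`) in a bipartite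
`S_{1,1,3}`-free graph: statements (i)–(viii) of Lemma 3. -/
theorem statement10 {V : Type} [Fintype V] (G : SimpleGraph V)
    (hbip : ∃ Wp Bp : Set V, IsBipartition G Wp Bp)
    (hfree : IsEmpty (S113 ↪g G))
    (k : ℕ) (hk : 3 ≤ k) (u : V) (a b : Fin k → V)
    (hmax : MaximalSimpleTreeCopy G k u a b) :
    let A0 : Set V := Set.range a
    let B0 : Set V := Set.range b
    let B1 : Set V := NSet G B0 \ A0
    let B1' : Set V := {v | v ∈ B1 ∧ ∃! w, w ∈ B0 ∧ G.Adj v w}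
    let B1'' : Set V := {v | v ∈ B1 ∧ ∀ w ∈ B0, G.Adj v w}
    let A1 : Set V := NSet G A0 \ ({u} ∪ B0)
    let C : Set V := G.neighborSet u \ (A0 ∪ B1)
    let D1 : Set V := NSet G A1 \ (C ∪ A0 ∪ B1)
    let D2 : Set V := NSet G B1 \ ({u} ∪ B0 ∪ A1)
    (∀ v ∈ B1, G.Adj u v) ∧
    (∀ v ∈ A1, ∀ i, G.Adj v (a i)) ∧
    (∀ v ∈ C, ∀ w, G.Adj v w → w ∈ ({u} : Set V) ∪ A1) ∧
    (∀ v ∈ D1, ∀ w, G.Adj v w → w ∈ A1) ∧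
    (B1 = B1' ∪ B1'') ∧
    (B1' = ∅ ∨ B1'' = ∅) ∧
    (∀ v ∈ B1', ∀ w, G.Adj v w → w ∈ ({u} : Set V) ∪ B0 ∪ A1) ∧
    (∀ v ∈ D2, ∀ w, G.Adj v w → w ∈ B1) :=
  statement10_general G hbip hfree k hk u a b hmax
end

section
/- Let G be a finite connected bipartite S_{1,1,3}-free graph and let T be an inclusionwise maximal induced copy of T_k in G with k ≥ 3, with centre u, A_0 the neighbours of u in T, B_0 the leaves of T, B_1 = N(B_0)\A_0, A_1 = N(A_0)\({u} ∪ B_0), C = N(u)\(A_0 ∪ B_1), D_1 = N(A_1)\(C ∪ A_0 ∪ B_1), and D_2 = N(B_1)\({u} ∪ B_0 ∪ A_1). Then every vertex of G belongs to {u} ∪ A_0 ∪ A_1 ∪ B_0 ∪ B_1 ∪ C ∪ D_1 ∪ D_2. -/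
open SimpleGraph

/-!
Let `K = {u} ∪ A₀ ∪ A₁ ∪ B₀ ∪ B₁`. The union in the statement is exactly the closed neighbourhood
`K ∪ N(K)`, so by connectivity it suffices to show that `K ∪ N(K)` is closed under adjacency.
Only the neighbours `y` of a vertex `x ∈ N(K) \ K` need an argument, and bipartiteness supplies
every non-adjacency between vertices on the same side:
* if `u ~ x` (so `x ∈ C`), then `y = u` or `y ∈ N(A₀)`, since otherwise `u – x – y` would be one
  more subdivided edge of the tree, contradicting maximality;
* if `x ∈ D₁`, with `aᵢ ~ v ~ x`, then `aᵢ ~ y`, since otherwise `u, bᵢ` and the path `v – x – y`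
  form an induced `S_{1,1,3}` centred at `aᵢ`;
* if `x ∈ D₂`, with `z ∈ B₁` and `z ~ x`, then `u ~ y`, since otherwise two vertices of `A₀` and
  the path `z – x – y` form an induced `S_{1,1,3}` centred at `u`. Here `u ~ z` because every
  neighbour `z` of a leaf `bᵢ` is adjacent to `u`: otherwise `aⱼ, aₗ` (`j, l ≠ i`, which needs
  `k ≥ 3`) and the path `aᵢ – bᵢ – z` form an induced `S_{1,1,3}` centred at `u`.
-/

theorem Fintype.exists_ne_ne_ne_of_two_lt_card {α : Type*} [Fintype α]
    (h : 2 < Fintype.card α) (x : α) : ∃ y z, y ≠ x ∧ z ≠ x ∧ y ≠ z := by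
  obtain ⟨p, q, r, hpq, hpr, hqr⟩ := Fintype.two_lt_card_iff.mp h
  rcases eq_or_ne p x with rfl | hp
  · exact ⟨q, r, hpq.symm, hpr.symm, hqr⟩
  rcases eq_or_ne q x with rfl | hq
  · exact ⟨p, r, hpq, hqr.symm, hpr⟩
  · exact ⟨p, q, hp, hq, hpq⟩

namespace SimpleGraph

variable {V : Type*} {G : SimpleGraph V} {s t : Set V} {x y : V}

theorem IsBipartiteWith.mem_iff_notMem_of_adj (hG : G.IsBipartiteWith s t) (hxy : G.Adj x y) :
    x ∈ s ↔ y ∉ s := by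
  rcases hG.mem_of_adj hxy with ⟨hx, hy⟩ | ⟨hx, hy⟩
  · exact iff_of_true hx (Set.disjoint_right.mp hG.disjoint hy)
  · exact iff_of_false (Set.disjoint_right.mp hG.disjoint hx) (not_not.mpr hy)

theorem IsBipartiteWith.not_adj_of_mem_iff (hG : G.IsBipartiteWith s t) (h : x ∈ s ↔ y ∈ s) :
    ¬ G.Adj x y := fun hxy => by
  have := hG.mem_iff_notMem_of_adj hxy
  tauto

theorem Reachable.mem_of_forall_adj_mem {S : Set V} (hS : ∀ x ∈ S, ∀ y, G.Adj x y → y ∈ S)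
    (h : G.Reachable x y) (hx : x ∈ S) : y ∈ S := by
  obtain ⟨p⟩ := h
  induction p with
  | nil => exact hx
  | cons hadj _ ih => exact ih (hS _ hx _ hadj)

end SimpleGraph

open SimpleGraph

theorem IsBipartition.isBipartiteWith {V : Type*} {G : SimpleGraph V} {W B : Set V}
    (h : IsBipartition G W B) : G.IsBipartiteWith W B where
  disjoint := h.2.1
  mem_of_adj x y hxy := by
    obtain ⟨hcover, -, hW, hB⟩ := h
    have hx : x ∈ W ∪ B := hcover ▸ Set.mem_univ x
    have hy : y ∈ W ∪ B := hcover ▸ Set.mem_univ y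
    have nW : ¬ (x ∈ W ∧ y ∈ W) := fun ⟨hx, hy⟩ => hW hx hy hxy.ne hxy
    have nB : ¬ (x ∈ B ∧ y ∈ B) := fun ⟨hx, hy⟩ => hB hx hy hxy.ne hxy
    rcases hx with hx | hx <;> rcases hy with hy | hy <;> tauto

theorem nSet_union {V : Type*} (G : SimpleGraph V) (X Y : Set V) :
    NSet G (X ∪ Y) = NSet G X ∪ NSet G Y := by
  ext v
  simp only [NSet, Set.mem_ofPred_eq, Set.mem_union, or_and_right, exists_or]

theorem nSet_singleton {V : Type*} (G : SimpleGraph V) (u : V) :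
    NSet G {u} = G.neighborSet u := by
  ext v
  simp [NSet]

section S113

variable {V : Type*} {G : SimpleGraph V} {v₀ v₁ v₂ v₃ v₄ v₅ : V}

theorem false_of_induced_S113 (hfree : IsEmpty (S113 ↪g G))
    (h01 : G.Adj v₀ v₁) (h02 : G.Adj v₀ v₂) (h03 : G.Adj v₀ v₃) (h34 : G.Adj v₃ v₄)
    (h45 : G.Adj v₄ v₅) (n12 : ¬ G.Adj v₁ v₂) (n13 : ¬ G.Adj v₁ v₃) (n14 : ¬ G.Adj v₁ v₄)
    (n15 : ¬ G.Adj v₁ v₅) (n23 : ¬ G.Adj v₂ v₃) (n24 : ¬ G.Adj v₂ v₄) (n25 : ¬ G.Adj v₂ v₅)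
    (n04 : ¬ G.Adj v₀ v₄) (n05 : ¬ G.Adj v₀ v₅) (n35 : ¬ G.Adj v₃ v₅) (d12 : v₁ ≠ v₂) :
    False := by
  have d13 : v₁ ≠ v₃ := by rintro rfl; exact n14 h34
  have d23 : v₂ ≠ v₃ := by rintro rfl; exact n24 h34
  have d14 : v₁ ≠ v₄ := by rintro rfl; exact n13 h34.symm
  have d24 : v₂ ≠ v₄ := by rintro rfl; exact n23 h34.symm
  have d15 : v₁ ≠ v₅ := by rintro rfl; exact n14 h45.symm
  have d25 : v₂ ≠ v₅ := by rintro rfl; exact n24 h45.symm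
  have d04 : v₀ ≠ v₄ := by rintro rfl; exact n05 h45
  have d05 : v₀ ≠ v₅ := by rintro rfl; exact n04 h45.symm
  have d35 : v₃ ≠ v₅ := fun h => n05 (h ▸ h03)
  refine hfree.false ⟨⟨![v₀, v₁, v₂, v₃, v₄, v₅], ?_⟩, ?_⟩
  · intro i j hij
    fin_cases i <;> fin_cases j <;>
      simp_all [h01.ne, h02.ne, h03.ne, h34.ne, h45.ne, h01.ne', h02.ne', h03.ne', h34.ne', h45.ne',
        Ne.symm]
  · intro i j
    change G.Adj (![v₀, v₁, v₂, v₃, v₄, v₅] i) (![v₀, v₁, v₂, v₃, v₄, v₅] j) ↔ S113.Adj i j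
    fin_cases i <;> fin_cases j <;>
      simp [S113, h01, h02, h03, h34, h45, n12, n13, n14, n15, n23, n24, n25, n04, n05, n35,
        Ne.symm, adj_comm]

-- The other seven non-adjacencies of an induced `S_{1,1,3}` join vertices on the same side.
theorem false_of_S113_of_isBipartiteWith (hfree : IsEmpty (S113 ↪g G)) {s t : Set V}
    (hG : G.IsBipartiteWith s t)
    (h01 : G.Adj v₀ v₁) (h02 : G.Adj v₀ v₂) (h03 : G.Adj v₀ v₃) (h34 : G.Adj v₃ v₄)
    (h45 : G.Adj v₄ v₅) (n14 : ¬ G.Adj v₁ v₄) (n24 : ¬ G.Adj v₂ v₄) (n05 : ¬ G.Adj v₀ v₅)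
    (d12 : v₁ ≠ v₂) : False := by
  have s01 := hG.mem_iff_notMem_of_adj h01
  have s02 := hG.mem_iff_notMem_of_adj h02
  have s03 := hG.mem_iff_notMem_of_adj h03
  have s34 := hG.mem_iff_notMem_of_adj h34
  have s45 := hG.mem_iff_notMem_of_adj h45
  exact false_of_induced_S113 hfree h01 h02 h03 h34 h45
    (hG.not_adj_of_mem_iff (by tauto)) (hG.not_adj_of_mem_iff (by tauto)) n14
    (hG.not_adj_of_mem_iff (by tauto)) (hG.not_adj_of_mem_iff (by tauto)) n24
    (hG.not_adj_of_mem_iff (by tauto)) (hG.not_adj_of_mem_iff (by tauto)) n05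
    (hG.not_adj_of_mem_iff (by tauto)) d12

end S113

def innerLayers {V : Type*} (G : SimpleGraph V) {k : ℕ} (u : V) (a b : Fin k → V) : Set V :=
  {u} ∪ Set.range a ∪ (NSet G (Set.range a) \ ({u} ∪ Set.range b)) ∪ Set.range b ∪
    (NSet G (Set.range b) \ Set.range a)

section SimpleTreeCopy

variable {V : Type*} {G : SimpleGraph V} {k : ℕ} {u c w : V} {a b : Fin k → V} {s t : Set V}

theorem IsSimpleTreeCopy.cons (hT : IsSimpleTreeCopy G k u a b) (huc : G.Adj u c)
    (hcw : G.Adj c w) (hwu : w ≠ u) (huw : ¬ G.Adj u w) (hac : ∀ i, ¬ G.Adj (a i) c)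
    (hbc : ∀ i, ¬ G.Adj (b i) c) (haw : ∀ i, ¬ G.Adj (a i) w) (hbw : ∀ i, ¬ G.Adj (b i) w) :
    IsSimpleTreeCopy G (k + 1) u (Fin.cons c a) (Fin.cons w b) := by
  obtain ⟨ha, hb, hau, hbu, hab, hua, hadj, hub, haa, hbb, hnab⟩ := hT
  have hca : ∀ i, c ≠ a i := fun i h => hbc i (h ▸ (hadj i).symm)
  have hcb : ∀ i, c ≠ b i := fun i h => hub i (h ▸ huc)
  have hwa : ∀ i, w ≠ a i := fun i h => huw (h ▸ hua i)
  have hwb : ∀ i, w ≠ b i := fun i h => hbc i (h ▸ hcw.symm)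
  refine ⟨Fin.cons_injective_iff.mpr ⟨?_, ha⟩, Fin.cons_injective_iff.mpr ⟨?_, hb⟩, ?_, ?_, ?_,
    ?_, ?_, ?_, ?_, ?_, ?_⟩
  · simpa [eq_comm] using hca
  · simpa [eq_comm] using hwb
  all_goals simp only [Fin.forall_fin_succ, Fin.cons_zero, Fin.cons_succ, ne_eq, Fin.succ_inj,
    Fin.succ_ne_zero, (Fin.succ_ne_zero _).symm, not_true_eq_false, not_false_eq_true,
    IsEmpty.forall_iff, forall_const, true_and]
  exacts [⟨huc.ne', hau⟩, ⟨hwu, hbu⟩, ⟨⟨hcw.ne, hcb⟩, fun i => ⟨fun h => hwa i h.symm, hab i⟩⟩,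
    ⟨huc, hua⟩, ⟨hcw, hadj⟩, ⟨huw, hub⟩, ⟨fun i h => hac i h.symm, fun i => ⟨hac i, haa i⟩⟩,
    ⟨fun i h => hbw i h.symm, fun i => ⟨hbw i, hbb i⟩⟩,
    ⟨fun i h => hbc i h.symm, fun i => ⟨haw i, hnab i⟩⟩]

theorem MaximalSimpleTreeCopy.false_of_cons (hmax : MaximalSimpleTreeCopy G k u a b)
    (huc : G.Adj u c) (hcw : G.Adj c w) (hwu : w ≠ u) (huw : ¬ G.Adj u w)
    (hac : ∀ i, ¬ G.Adj (a i) c) (hbc : ∀ i, ¬ G.Adj (b i) c) (haw : ∀ i, ¬ G.Adj (a i) w)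
    (hbw : ∀ i, ¬ G.Adj (b i) w) : False := by
  have hsub : treeVerts k u a b ⊆ treeVerts (k + 1) u (Fin.cons c a) (Fin.cons w b) := by
    rintro x ((hx | ⟨i, rfl⟩) | ⟨i, rfl⟩)
    exacts [Or.inl (Or.inl hx), Or.inl (Or.inr ⟨i.succ, rfl⟩), Or.inr ⟨i.succ, rfl⟩]
  have hw : w ∈ treeVerts (k + 1) u (Fin.cons c a) (Fin.cons w b) := Or.inr ⟨0, rfl⟩
  rw [← hmax.2 _ _ _ _ (hmax.1.cons huc hcw hwu huw hac hbc haw hbw) hsub] at hw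
  obtain ⟨-, -, -, -, -, hua, -⟩ := hmax.1
  rcases hw with (rfl | ⟨i, rfl⟩) | ⟨i, rfl⟩
  · exact hwu rfl
  · exact huw (hua i)
  · exact hbc i hcw.symm

theorem MaximalSimpleTreeCopy.eq_or_exists_adj_of_adj_center
    (hmax : MaximalSimpleTreeCopy G k u a b) (hG : G.IsBipartiteWith s t) (huc : G.Adj u c)
    (hbc : ∀ i, ¬ G.Adj (b i) c) (hcw : G.Adj c w) : w = u ∨ ∃ i, G.Adj (a i) w := by
  obtain ⟨-, -, -, -, -, hua, hab, -⟩ := hmax.1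
  by_contra! h
  obtain ⟨hwu, haw⟩ := h
  have suc := hG.mem_iff_notMem_of_adj huc
  have scw := hG.mem_iff_notMem_of_adj hcw
  have sua i := hG.mem_iff_notMem_of_adj (hua i)
  have sab i := hG.mem_iff_notMem_of_adj (hab i)
  refine hmax.false_of_cons huc hcw hwu (hG.not_adj_of_mem_iff (by tauto))
    (fun i => hG.not_adj_of_mem_iff ?_) hbc haw (fun i => hG.not_adj_of_mem_iff ?_)
  · have := sua i; tauto
  · have := sua i; have := sab i; tauto

theorem IsSimpleTreeCopy.adj_center_of_adj_leaf (hT : IsSimpleTreeCopy G k u a b) (hk : 3 ≤ k)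
    (hfree : IsEmpty (S113 ↪g G)) (hG : G.IsBipartiteWith s t) {i : Fin k} {z : V}
    (hbz : G.Adj (b i) z) : G.Adj u z := by
  obtain ⟨ha, -, -, -, -, hua, hab, -, -, -, hnab⟩ := hT
  obtain ⟨j, l, hji, hli, hjl⟩ :=
    Fintype.exists_ne_ne_ne_of_two_lt_card (by rw [Fintype.card_fin]; omega) i
  by_contra huz
  exact false_of_S113_of_isBipartiteWith hfree hG (hua j) (hua l) (hua i) (hab i) hbz
    (hnab j i hji) (hnab l i hli) huz (ha.ne hjl)

theorem MaximalSimpleTreeCopy.mem_closedNbhd_innerLayers_of_adj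
    (hmax : MaximalSimpleTreeCopy G k u a b) (hk : 3 ≤ k) (hfree : IsEmpty (S113 ↪g G))
    (hG : G.IsBipartiteWith s t) {x y : V}
    (hx : x ∈ innerLayers G u a b ∪ NSet G (innerLayers G u a b)) (hxy : G.Adj x y) :
    y ∈ innerLayers G u a b ∪ NSet G (innerLayers G u a b) := by
  obtain ⟨ha, -, -, hbu, -, hua, hab, -⟩ := hmax.1
  set K := innerLayers G u a b with hK
  have hKu : u ∈ K := by simp [hK, innerLayers]
  have hKa : ∀ i, a i ∈ K := fun i => by simp [hK, innerLayers]
  have hNK : ∀ {w}, w ∈ K → G.Adj w y → y ∈ K ∪ NSet G K := fun hw h => Or.inr ⟨_, hw, h⟩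
  by_cases hxK : x ∈ K
  · exact hNK hxK hxy
  have hxa : ∀ i, ¬ G.Adj (a i) x := fun i h => hxK <| by
    have : x ∈ NSet G (Set.range a) := ⟨a i, ⟨i, rfl⟩, h⟩
    simp only [hK, innerLayers, Set.mem_union, Set.mem_sdiff]
    tauto
  have hxb : ∀ i, ¬ G.Adj (b i) x := fun i h => hxK <| by
    have : x ∈ NSet G (Set.range b) := ⟨b i, ⟨i, rfl⟩, h⟩
    simp only [hK, innerLayers, Set.mem_union, Set.mem_sdiff]
    tauto
  have hC : G.Adj u x → y ∈ K ∪ NSet G K := fun hux => by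
    rcases hmax.eq_or_exists_adj_of_adj_center hG hux hxb hxy with rfl | ⟨i, hi⟩
    exacts [Or.inl hKu, hNK (hKa i) hi]
  obtain ⟨w, hwK, hwx⟩ := hx.resolve_left hxK
  rcases hwK with
    ((((rfl | ⟨i, rfl⟩) | ⟨⟨_, ⟨i, rfl⟩, hiw⟩, -⟩) | ⟨i, rfl⟩) | ⟨⟨_, ⟨i, rfl⟩, hiw⟩, -⟩)
  · exact hC hwx
  · exact absurd hwx (hxa i)
  · by_cases hux : G.Adj u x
    · exact hC hux
    by_contra hy
    exact false_of_S113_of_isBipartiteWith hfree hG (hua i).symm (hab i) hiw hwx hxy hux (hxb i)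
      (fun h => hy (hNK (hKa i) h)) (hbu i).symm
  · exact absurd hwx (hxb i)
  · have huw := hmax.1.adj_center_of_adj_leaf hk hfree hG hiw
    obtain ⟨j, l, -, -, hjl⟩ :=
      Fintype.exists_ne_ne_ne_of_two_lt_card (by rw [Fintype.card_fin]; omega) i
    by_contra hy
    exact false_of_S113_of_isBipartiteWith hfree hG (hua j) (hua l) huw hwx hxy (hxa j) (hxa l)
      (fun h => hy (hNK hKu h)) (ha.ne hjl)

end SimpleTreeCopy

theorem statement11_general {V : Type} (G : SimpleGraph V)
    (hbip : ∃ Wp Bp : Set V, IsBipartition G Wp Bp)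
    (hconn : G.Connected)
    (hfree : IsEmpty (S113 ↪g G))
    (k : ℕ) (hk : 3 ≤ k) (u : V) (a b : Fin k → V)
    (hmax : MaximalSimpleTreeCopy G k u a b) :
    let A0 : Set V := Set.range a
    let B0 : Set V := Set.range b
    let B1 : Set V := NSet G B0 \ A0
    let A1 : Set V := NSet G A0 \ ({u} ∪ B0)
    let C : Set V := G.neighborSet u \ (A0 ∪ B1)
    let D1 : Set V := NSet G A1 \ (C ∪ A0 ∪ B1)
    let D2 : Set V := NSet G B1 \ ({u} ∪ B0 ∪ A1)
    ∀ v : V, v ∈ ({u} : Set V) ∪ A0 ∪ A1 ∪ B0 ∪ B1 ∪ C ∪ D1 ∪ D2 := by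
  dsimp only
  intro v
  obtain ⟨W, B, hWB⟩ := hbip
  have hv : v ∈ innerLayers G u a b ∪ NSet G (innerLayers G u a b) :=
    (hconn.preconnected u v).mem_of_forall_adj_mem
      (fun _ hx _ hxy => hmax.mem_closedNbhd_innerLayers_of_adj hk hfree hWB.isBipartiteWith hx hxy)
      (Or.inl (by simp [innerLayers]))
  simp only [innerLayers, nSet_union, nSet_singleton, Set.mem_union, Set.mem_sdiff,
    Set.mem_singleton_iff] at hv ⊢
  grind

/-- In a finite connected bipartite `S_{1,1,3}`-free graph, every vertex belongs to
`{u} ∪ A_0 ∪ A_1 ∪ B_0 ∪ B_1 ∪ C ∪ D_1 ∪ D_2`, where these sets are defined from a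
maximal induced copy of `T_k` (`k ≥ 3`) with centre `u`. -/
theorem statement11 {V : Type} [Fintype V] (G : SimpleGraph V)
    (hbip : ∃ Wp Bp : Set V, IsBipartition G Wp Bp)
    (hconn : G.Connected)
    (hfree : IsEmpty (S113 ↪g G))
    (k : ℕ) (hk : 3 ≤ k) (u : V) (a b : Fin k → V)
    (hmax : MaximalSimpleTreeCopy G k u a b) :
    let A0 : Set V := Set.range a
    let B0 : Set V := Set.range b
    let B1 : Set V := NSet G B0 \ A0
    let A1 : Set V := NSet G A0 \ ({u} ∪ B0)
    let C : Set V := G.neighborSet u \ (A0 ∪ B1)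
    let D1 : Set V := NSet G A1 \ (C ∪ A0 ∪ B1)
    let D2 : Set V := NSet G B1 \ ({u} ∪ B0 ∪ A1)
    ∀ v : V, v ∈ ({u} : Set V) ∪ A0 ∪ A1 ∪ B0 ∪ B1 ∪ C ∪ D1 ∪ D2 :=
  statement11_general G hbip hconn hfree k hk u a b hmax
end

section
/- Let G be a finite S_{1,1,3}-free graph, let u be a vertex, let a_1, ..., a_k (k ≥ 4) be distinct neighbours of u forming an independent set, and let b_1, ..., b_k be vertices distinct from u and the a_i's such that {u, b_1, ..., b_k} contains no edge from u to any b_i, and for each i the vertex b_i is adjacent to a_i but non-adjacent to a_j for all j ≠ i. Then {b_1, ..., b_k} is an independent set, and consequently the subgraph induced by {u, a_1, ..., a_k, b_1, ..., b_k} is isomorphic to the simple tree T_k. -/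
open SimpleGraph

/-! If `b i` and `b j` were adjacent, two further indices `p, q` (this is where `k ≥ 4` enters)
would make `u`, with the pendant neighbours `a p`, `a q` and the path `a i – b i – b j`, an induced
`S_{1,1,3}`. Once the `b i` are independent, all adjacencies among `u`, the `a i` and the `b i` are
those of `T_k`, and the map is injective because distinct vertices of `T_k` have distinct
neighbourhoods (in `S_{1,1,3}` only the two short leaves share one). -/

namespace SimpleGraph

variable {V W : Type*} {G : SimpleGraph V} {H : SimpleGraph W} {f : W → V}

theorem neighborSet_eq_of_adj_iff (hf : ∀ v w, G.Adj (f v) (f w) ↔ H.Adj v w) {v w : W}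
    (h : f v = f w) : H.neighborSet v = H.neighborSet w := by
  ext x
  simp only [mem_neighborSet, ← hf, h]

end SimpleGraph

namespace simpleTree

variable {k : ℕ}

def inner (i : Fin k) : Fin (2 * k + 1) := ⟨i + 1, by omega⟩

def leaf (i : Fin k) : Fin (2 * k + 1) := ⟨i + k + 1, by omega⟩

@[elab_as_elim]
theorem vertex_cases {motive : Fin (2 * k + 1) → Prop} (center : motive 0)
    (inner : ∀ i, motive (inner i)) (leaf : ∀ i, motive (leaf i)) (v : Fin (2 * k + 1)) :
    motive v := by
  obtain ⟨_ | n, hn⟩ := v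
  · exact center
  · by_cases h : n < k
    · exact inner ⟨n, h⟩
    · convert leaf ⟨n - k, by omega⟩
      simp only [simpleTree.leaf]
      omega

theorem adj_iff_val {v w : Fin (2 * k + 1)} : (simpleTree k).Adj v w ↔ v.val ≠ w.val ∧
    ((v.val = 0 ∧ 1 ≤ w.val ∧ w.val ≤ k) ∨ (1 ≤ v.val ∧ v.val ≤ k ∧ w.val = v.val + k) ∨
      (w.val = 0 ∧ 1 ≤ v.val ∧ v.val ≤ k) ∨ (1 ≤ w.val ∧ w.val ≤ k ∧ v.val = w.val + k)) := by
  rw [simpleTree, fromRel_adj, Fin.val_ne_iff, or_assoc]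

@[simp] theorem adj_zero_inner (i : Fin k) : (simpleTree k).Adj 0 (inner i) := by
  rw [adj_iff_val]; simp only [inner, Fin.val_zero, true_and]; omega

@[simp] theorem not_adj_zero_leaf (i : Fin k) : ¬ (simpleTree k).Adj 0 (leaf i) := by
  rw [adj_iff_val]; simp only [leaf, Fin.val_zero, true_and]; omega

@[simp] theorem not_adj_inner_inner (i j : Fin k) : ¬ (simpleTree k).Adj (inner i) (inner j) := by
  rw [adj_iff_val]; simp only [inner]; omega

@[simp] theorem adj_inner_leaf (i j : Fin k) : (simpleTree k).Adj (inner i) (leaf j) ↔ i = j := by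
  rw [adj_iff_val, Fin.ext_iff]; simp only [inner, leaf]; omega

@[simp] theorem not_adj_leaf_leaf (i j : Fin k) : ¬ (simpleTree k).Adj (leaf i) (leaf j) := by
  rw [adj_iff_val]; simp only [leaf]; omega

@[simp] theorem adj_inner_zero (i : Fin k) : (simpleTree k).Adj (inner i) 0 :=
  (adj_zero_inner i).symm

@[simp] theorem not_adj_leaf_zero (i : Fin k) : ¬ (simpleTree k).Adj (leaf i) 0 :=
  fun h => not_adj_zero_leaf i h.symm

@[simp] theorem adj_leaf_inner (i j : Fin k) : (simpleTree k).Adj (leaf i) (inner j) ↔ j = i := by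
  rw [adj_comm, adj_inner_leaf]

theorem neighborSet_injective (hk : 2 ≤ k) : Function.Injective (simpleTree k).neighborSet := by
  intro v w h
  have hvw (x : Fin (2 * k + 1)) : (simpleTree k).Adj v x ↔ (simpleTree k).Adj w x :=
    Set.ext_iff.mp h x
  induction v using vertex_cases with
  | center =>
    induction w using vertex_cases with
    | center => rfl
    | inner j => simpa using hvw (leaf j)
    | leaf j =>
      -- a middle vertex off the branch of `leaf j` is adjacent to the centre only
      obtain ⟨m, hm⟩ := Fintype.exists_ne_of_one_lt_card (by rw [Fintype.card_fin]; omega) j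
      simpa [hm] using hvw (inner m)
  | inner i =>
    induction w using vertex_cases with
    | center => simpa using hvw (leaf i)
    | inner j => rw [show j = i by simpa using hvw (leaf i)]
    | leaf j => simpa using hvw 0
  | leaf i =>
    induction w using vertex_cases with
    | center =>
      obtain ⟨m, hm⟩ := Fintype.exists_ne_of_one_lt_card (by rw [Fintype.card_fin]; omega) i
      simpa [hm] using hvw (inner m)
    | inner j => simpa using hvw 0
    | leaf j => rw [show i = j by simpa using hvw (inner i)]

section lift

variable {V : Type*}

def lift (u : V) (a b : Fin k → V) (v : Fin (2 * k + 1)) : V :=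
  if h₀ : v.val = 0 then u
  else if h : v.val ≤ k then a ⟨v.val - 1, by omega⟩
  else b ⟨v.val - k - 1, by have := v.isLt; omega⟩

variable (u : V) (a b : Fin k → V)

@[simp] theorem lift_zero : lift u a b 0 = u := dif_pos rfl

@[simp] theorem lift_inner (i : Fin k) : lift u a b (inner i) = a i := by
  rw [lift, dif_neg (by simp [inner]), dif_pos (by simp [inner])]
  simp [inner]

@[simp] theorem lift_leaf (i : Fin k) : lift u a b (leaf i) = b i := by
  rw [lift, dif_neg (by simp [leaf]), dif_neg (by simp [leaf])]
  congr 1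
  ext
  simp only [leaf]
  omega

variable {G : SimpleGraph V} {u a b}

theorem adj_lift_iff (hua : ∀ i, G.Adj u (a i))
    (hub : ∀ i, ¬ G.Adj u (b i)) (haa : ∀ i j, ¬ G.Adj (a i) (a j))
    (hab : ∀ i j, G.Adj (a i) (b j) ↔ i = j) (hbb : ∀ i j, ¬ G.Adj (b i) (b j))
    (v w : Fin (2 * k + 1)) : G.Adj (lift u a b v) (lift u a b w) ↔ (simpleTree k).Adj v w := by
  induction v using vertex_cases <;> induction w using vertex_cases <;>
    simp [hua, hub, haa, hab, hbb, G.adj_comm _ u, G.adj_comm (b _) (a _), eq_comm]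

theorem exists_embedding (hk : 2 ≤ k) (hua : ∀ i, G.Adj u (a i))
    (hub : ∀ i, ¬ G.Adj u (b i)) (haa : ∀ i j, ¬ G.Adj (a i) (a j))
    (hab : ∀ i j, G.Adj (a i) (b j) ↔ i = j) (hbb : ∀ i j, ¬ G.Adj (b i) (b j)) :
    ∃ φ : simpleTree k ↪g G, Set.range φ = {u} ∪ Set.range a ∪ Set.range b := by
  have hadj := adj_lift_iff hua hub haa hab hbb
  have hinj : Function.Injective (lift u a b) := fun v w h =>
    neighborSet_injective hk (neighborSet_eq_of_adj_iff hadj h)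
  refine ⟨⟨⟨lift u a b, hinj⟩, hadj _ _⟩, ?_⟩
  ext x
  constructor
  · rintro ⟨v, rfl⟩
    induction v using vertex_cases <;> simp
  · rintro ((rfl | ⟨i, rfl⟩) | ⟨i, rfl⟩)
    exacts [⟨0, lift_zero _ a b⟩, ⟨inner i, lift_inner u a b i⟩, ⟨leaf i, lift_leaf u a b i⟩]

end lift

end simpleTree

theorem Fintype.exists_pair_ne_avoiding {α : Type*} [Fintype α] (h : 4 ≤ Fintype.card α)
    (i j : α) : ∃ p q : α, p ≠ q ∧ p ≠ i ∧ p ≠ j ∧ q ≠ i ∧ q ≠ j := by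
  classical
  have hcard : 1 < ({i, j}ᶜ : Finset α).card := by
    rw [Finset.card_compl]
    have := Finset.card_le_two (a := i) (b := j)
    omega
  obtain ⟨p, hp, q, hq, hpq⟩ := Finset.one_lt_card.mp hcard
  simp only [Finset.mem_compl, Finset.mem_insert, Finset.mem_singleton, not_or] at hp hq
  exact ⟨p, q, hpq, hp.1, hp.2, hq.1, hq.2⟩

namespace S113

instance decidableAdj : DecidableRel S113.Adj := fun _ _ =>
  decidable_of_iff _ (fromRel_adj _ _ _).symm

theorem eq_or_twins_of_neighborSet_eq {v w : Fin 6}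
    (h : S113.neighborSet v = S113.neighborSet w) :
    v = w ∨ (v = 1 ∧ w = 2) ∨ (v = 2 ∧ w = 1) := by
  have twins : ∀ v w : Fin 6, (∀ x, S113.Adj v x ↔ S113.Adj w x) →
      v = w ∨ (v = 1 ∧ w = 2) ∨ (v = 2 ∧ w = 1) := by
    decide
  exact twins v w fun x => Set.ext_iff.mp h x

theorem nonempty_embedding {V : Type*} {G : SimpleGraph V} {c x y p q r : V} (hxy : x ≠ y)
    (hcx : G.Adj c x) (hcy : G.Adj c y) (hcp : G.Adj c p) (hpq : G.Adj p q) (hqr : G.Adj q r)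
    (hnxy : ¬ G.Adj x y) (hxp : ¬ G.Adj x p) (hyp : ¬ G.Adj y p) (hcq : ¬ G.Adj c q)
    (hcr : ¬ G.Adj c r) (hpr : ¬ G.Adj p r) (hxq : ¬ G.Adj x q) (hxr : ¬ G.Adj x r)
    (hyq : ¬ G.Adj y q) (hyr : ¬ G.Adj y r) : Nonempty (S113 ↪g G) := by
  let g : Fin 6 → V := ![c, x, y, p, q, r]
  have hadj (v w : Fin 6) : G.Adj (g v) (g w) ↔ S113.Adj v w := by
    fin_cases v <;> fin_cases w <;>
      simp [g, S113, *, G.adj_comm _ c, G.adj_comm q p, G.adj_comm r q]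
    all_goals rw [G.adj_comm]; assumption
  have hinj : Function.Injective g := fun v w h => by
    rcases eq_or_twins_of_neighborSet_eq (neighborSet_eq_of_adj_iff hadj h) with
      hvw | ⟨rfl, rfl⟩ | ⟨rfl, rfl⟩
    exacts [hvw, absurd h hxy, absurd h hxy.symm]
  exact ⟨⟨⟨g, hinj⟩, hadj _ _⟩⟩

end S113

theorem statement15_general {V : Type} (G : SimpleGraph V)
    (hfree : IsEmpty (S113 ↪g G))
    (k : ℕ) (hk : 4 ≤ k) (u : V) (a b : Fin k → V)
    (ha_inj : Function.Injective a)
    (hua : ∀ i, G.Adj u (a i))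
    (ha_ind : ∀ i j, i ≠ j → ¬ G.Adj (a i) (a j))
    (hub : ∀ i, ¬ G.Adj u (b i))
    (hab : ∀ i, G.Adj (a i) (b i))
    (hab' : ∀ i j, i ≠ j → ¬ G.Adj (a j) (b i)) :
    (∀ i j, i ≠ j → ¬ G.Adj (b i) (b j)) ∧
    ∃ φ : simpleTree k ↪g G,
      Set.range φ = {u} ∪ Set.range a ∪ Set.range b := by
  have hbb : ∀ i j, i ≠ j → ¬ G.Adj (b i) (b j) := by
    intro i j hij hadj
    obtain ⟨p, q, hpq, hpi, hpj, hqi, hqj⟩ :=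
      Fintype.exists_pair_ne_avoiding (by simpa using hk) i j
    exact hfree.false (S113.nonempty_embedding (ha_inj.ne hpq) (hua p) (hua q) (hua i) (hab i)
      hadj (ha_ind p q hpq) (ha_ind p i hpi) (ha_ind q i hqi) (hub i) (hub j)
      (hab' j i hij.symm) (hab' i p hpi.symm) (hab' j p hpj.symm) (hab' i q hqi.symm)
      (hab' j q hqj.symm)).some
  refine ⟨hbb, simpleTree.exists_embedding (by omega) hua hub ?_ ?_ ?_⟩
  · intro i j
    rcases eq_or_ne i j with rfl | hij
    exacts [G.irrefl, ha_ind i j hij]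
  · intro i j
    rcases eq_or_ne i j with rfl | hij
    exacts [iff_of_true (hab i) rfl, iff_of_false (hab' j i hij.symm) hij]
  · intro i j
    rcases eq_or_ne i j with rfl | hij
    exacts [G.irrefl, hbb i j hij]

/-- In an `S_{1,1,3}`-free graph: if `u` has `k ≥ 4` distinct independent neighbours
`a_1, …, a_k`, and `b_1, …, b_k` are vertices distinct from `u` and the `a_j`'s,
non-adjacent to `u`, with `b_i` adjacent to `a_i` and non-adjacent to `a_j` for
`j ≠ i`, then the `b_i` are pairwise non-adjacent, and hence the subgraph induced by
`{u, a_1, …, a_k, b_1, …, b_k}` is isomorphic to the simple tree `T_k`. -/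
theorem statement15 {V : Type} [Fintype V] (G : SimpleGraph V)
    (hfree : IsEmpty (S113 ↪g G))
    (k : ℕ) (hk : 4 ≤ k) (u : V) (a b : Fin k → V)
    (ha_inj : Function.Injective a)
    (hua : ∀ i, G.Adj u (a i))
    (ha_ind : ∀ i j, i ≠ j → ¬ G.Adj (a i) (a j))
    (hb_ne_u : ∀ i, b i ≠ u) (hb_ne_a : ∀ i j, b i ≠ a j)
    (hub : ∀ i, ¬ G.Adj u (b i))
    (hab : ∀ i, G.Adj (a i) (b i))
    (hab' : ∀ i j, i ≠ j → ¬ G.Adj (a j) (b i)) :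
    (∀ i j, i ≠ j → ¬ G.Adj (b i) (b j)) ∧
    ∃ φ : simpleTree k ↪g G,
      Set.range φ = {u} ∪ Set.range a ∪ Set.range b :=
  statement15_general G hfree k hk u a b ha_inj hua ha_ind hub hab hab'
end
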